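/- arXiv:2601.12776 — 7 statements merged into one kernel-verified Lean document; each statement's English description precedes it below -/
import Mathlib

section
/- Let H = ℝ^n, S skew-adjoint, L symmetric, N : H → ℝ with gradient map N'. Given zⁿ, z̃ ∈ H, Δt > 0, and λ ∈ ℝ, suppose z^{n+1} ∈ H satisfies (z^{n+1} - zⁿ)/Δt = S(L((zⁿ + z^{n+1})/2) + λ • N'(z̃)) and N(z^{n+1}) - N(zⁿ) = λ * ⟪N'(z̃), z^{n+1} - zⁿ⟫. Then (1/2)⟪z^{n+1}, L z^{n+1}⟫ + N(z^{n+1}) = (1/2)⟪zⁿ, L zⁿ⟫ + N(zⁿ). -/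
open scoped RealInnerProductSpace

/-! Pairing the update with `w = L z^{n+1/2} + λ N'(z̃)` kills the right-hand side, since
`⟪S w, w⟫ = 0` for skew-adjoint `S`. By symmetry of `L` the quadratic part of the pairing
telescopes to the change of `½⟪z, L z⟫`, and the Lagrange-multiplier equation identifies the
remaining term with the change of `N`. -/

section
variable {E : Type*} [NormedAddCommGroup E] [InnerProductSpace ℝ E]

theorem inner_apply_self_eq_zero_of_skew {S : E →L[ℝ] E}
    (hS : ∀ x y, ⟪S x, y⟫ = -⟪x, S y⟫) (x : E) : ⟪S x, x⟫ = 0 := by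
  linarith [hS x x, real_inner_comm x (S x)]

theorem inner_eq_zero_of_smul_eq_skew_apply {S : E →L[ℝ] E}
    (hS : ∀ x y, ⟪S x, y⟫ = -⟪x, S y⟫) {c : ℝ} (hc : c ≠ 0) {d w : E} (h : c • d = S w) :
    ⟪d, w⟫ = 0 := by
  have hcd : c * ⟪d, w⟫ = 0 := by
    rw [← real_inner_smul_left, h, inner_apply_self_eq_zero_of_skew hS]
  exact (mul_eq_zero.mp hcd).resolve_left hc

theorem inner_sub_apply_midpoint_of_symm {L : E →L[ℝ] E}
    (hL : ∀ x y, ⟪L x, y⟫ = ⟪x, L y⟫) (x y : E) :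
    ⟪y - x, L ((1 / 2 : ℝ) • (x + y))⟫ = (1 / 2 : ℝ) * ⟪y, L y⟫ - (1 / 2 : ℝ) * ⟪x, L x⟫ := by
  have hcross : ⟪y, L x⟫ = ⟪x, L y⟫ := by rw [← hL, real_inner_comm]
  simp only [map_smul, map_add, real_inner_smul_right, inner_sub_left, inner_add_right]
  linarith

end

theorem stmt2_general {n : ℕ}
    (S L : EuclideanSpace ℝ (Fin n) →L[ℝ] EuclideanSpace ℝ (Fin n))
    (hS : ∀ x y, ⟪S x, y⟫ = -⟪x, S y⟫)
    (hL : ∀ x y, ⟪L x, y⟫ = ⟪x, L y⟫)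
    (N : EuclideanSpace ℝ (Fin n) → ℝ)
    (N' : EuclideanSpace ℝ (Fin n) → EuclideanSpace ℝ (Fin n))
    (zn zn1 zt : EuclideanSpace ℝ (Fin n)) (Δt lam : ℝ) (hΔt : 0 < Δt)
    (hupd : (Δt)⁻¹ • (zn1 - zn)
      = S (L ((1 / 2 : ℝ) • (zn + zn1)) + lam • N' zt))
    (henergy : N zn1 - N zn = lam * ⟪N' zt, zn1 - zn⟫) :
    (1 / 2 : ℝ) * ⟪zn1, L zn1⟫ + N zn1 = (1 / 2 : ℝ) * ⟪zn, L zn⟫ + N zn := by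
  have horth := inner_eq_zero_of_smul_eq_skew_apply hS (inv_ne_zero hΔt.ne') hupd
  rw [inner_add_right, inner_sub_apply_midpoint_of_symm hL, real_inner_smul_right,
    real_inner_comm (N' zt)] at horth
  linarith

/-- Discrete original-energy conservation of the LM-CN scheme. -/
theorem stmt2 {n : ℕ}
    (S L : EuclideanSpace ℝ (Fin n) →L[ℝ] EuclideanSpace ℝ (Fin n))
    (hS : ∀ x y, ⟪S x, y⟫ = -⟪x, S y⟫)
    (hL : ∀ x y, ⟪L x, y⟫ = ⟪x, L y⟫)
    (N : EuclideanSpace ℝ (Fin n) → ℝ)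
    (N' : EuclideanSpace ℝ (Fin n) → EuclideanSpace ℝ (Fin n))
    (hN : ∀ x, HasGradientAt N (N' x) x)
    (zn zn1 zt : EuclideanSpace ℝ (Fin n)) (Δt lam : ℝ) (hΔt : 0 < Δt)
    (hupd : (Δt)⁻¹ • (zn1 - zn)
      = S (L ((1 / 2 : ℝ) • (zn + zn1)) + lam • N' zt))
    (henergy : N zn1 - N zn = lam * ⟪N' zt, zn1 - zn⟫) :
    (1 / 2 : ℝ) * ⟪zn1, L zn1⟫ + N zn1 = (1 / 2 : ℝ) * ⟪zn, L zn⟫ + N zn :=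
  stmt2_general S L hS hL N N' zn zn1 zt Δt lam hΔt hupd henergy
end

section
/- Let S, L : ℝ^n →L[ℝ] ℝ^n with S skew-adjoint and L symmetric, and let r : ℝ → ℝ, z : ℝ → ℝ^n, g : ℝ → ℝ^n be differentiable with z'(t) = S(L(z t) + r t • g t) and r'(t) = (1/2) * ⟪g t, z'(t)⟫ for all t. Then t ↦ (1/2)⟪z t, L(z t)⟫ + (r t)^2 is constant. -/
open scoped RealInnerProductSpace

/-! Along a solution, the energy changes at rate `⟪L z + r g, z'⟫`: the symmetric part contributes
`⟪L z, z'⟫` and the `r`-equation was designed to contribute exactly `r ⟪g, z'⟫`. Since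
`z' = S (L z + r g)` with `S` skew-adjoint, this rate is `⟪w, S w⟫ = 0` for `w = L z + r g`. -/

section

variable {E : Type*} [NormedAddCommGroup E] [InnerProductSpace ℝ E]

theorem real_inner_map_self_eq_zero_of_skew {S : E →L[ℝ] E}
    (hS : ∀ x y, ⟪S x, y⟫ = -⟪x, S y⟫) (x : E) : ⟪x, S x⟫ = 0 := by
  have h := hS x x
  rw [real_inner_comm] at h
  linarith

theorem HasDerivAt.inner_map_self {L : E →L[ℝ] E} (hL : (L : E →ₗ[ℝ] E).IsSymmetric)
    {z : ℝ → E} {z' : E} {t : ℝ} (hz : HasDerivAt z z' t) :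
    HasDerivAt (fun t => ⟪z t, L (z t)⟫) (2 * ⟪L (z t), z'⟫) t := by
  refine (hz.inner ℝ (L.hasFDerivAt.comp_hasDerivAt t hz)).congr_deriv ?_
  have hsymm : ⟪L (z t), z'⟫ = ⟪z t, L z'⟫ := hL (z t) z'
  change ⟪z t, L z'⟫ + ⟪z', L (z t)⟫ = 2 * ⟪L (z t), z'⟫
  rw [← hsymm, real_inner_comm z']
  ring

noncomputable def savEnergy (L : E →L[ℝ] E) (z : ℝ → E) (r : ℝ → ℝ) (t : ℝ) : ℝ :=
  (1 / 2 : ℝ) * ⟪z t, L (z t)⟫ + r t ^ 2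

theorem hasDerivAt_savEnergy {S L : E →L[ℝ] E}
    (hS : ∀ x y, ⟪S x, y⟫ = -⟪x, S y⟫) (hL : (L : E →ₗ[ℝ] E).IsSymmetric)
    {r : ℝ → ℝ} {z g : ℝ → E} {r' : ℝ} {z' : E} {t : ℝ}
    (hz : HasDerivAt z z' t) (hr : HasDerivAt r r' t)
    (heqz : z' = S (L (z t) + r t • g t)) (heqr : r' = (1 / 2 : ℝ) * ⟪g t, z'⟫) :
    HasDerivAt (savEnergy L z r) 0 t := by
  have hrate : (1 / 2 : ℝ) * (2 * ⟪L (z t), z'⟫) + 2 * r t * r'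
      = ⟪L (z t) + r t • g t, z'⟫ := by
    rw [heqr, inner_add_left, real_inner_smul_left]
    ring
  have hzero : ⟪L (z t) + r t • g t, z'⟫ = 0 := by
    rw [heqz]
    exact real_inner_map_self_eq_zero_of_skew hS _
  refine (((hz.inner_map_self hL).const_mul (1 / 2 : ℝ)).add (hr.fun_pow 2)).congr_deriv ?_
  rw [← hzero, ← hrate]
  ring

end

/-- Modified-energy conservation of the SAV reformulation. -/
theorem stmt3 {n : ℕ}
    (S L : EuclideanSpace ℝ (Fin n) →L[ℝ] EuclideanSpace ℝ (Fin n))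
    (hS : ∀ x y, ⟪S x, y⟫ = -⟪x, S y⟫)
    (hL : ∀ x y, ⟪L x, y⟫ = ⟪x, L y⟫)
    (r r' : ℝ → ℝ) (z z' g : ℝ → EuclideanSpace ℝ (Fin n))
    (hz : ∀ t, HasDerivAt z (z' t) t)
    (hr : ∀ t, HasDerivAt r (r' t) t)
    (heqz : ∀ t, z' t = S (L (z t) + r t • g t))
    (heqr : ∀ t, r' t = (1 / 2 : ℝ) * ⟪g t, z' t⟫) :
    ∀ t₁ t₂, (1 / 2 : ℝ) * ⟪z t₁, L (z t₁)⟫ + (r t₁) ^ 2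
      = (1 / 2 : ℝ) * ⟪z t₂, L (z t₂)⟫ + (r t₂) ^ 2 := by
  have hE : ∀ t, HasDerivAt (savEnergy L z r) 0 t := fun t =>
    hasDerivAt_savEnergy hS hL (hz t) (hr t) (heqz t) (heqr t)
  exact is_const_of_deriv_eq_zero (fun t => (hE t).differentiableAt) (fun t => (hE t).deriv)
end

section
/- Let s ∈ ℕ, and let a : Fin s → Fin s → ℝ, b : Fin s → ℝ be Runge–Kutta coefficients satisfying the symplecticity condition b i * b j - b i * a i j - b j * a j i = 0 for all i, j. Let S skew-adjoint, L symmetric on ℝ^n, Δt ∈ ℝ, λ ∈ ℝ, and vectors zⁿ, z^{n+1}, zᵢ, kᵢ, z̃ᵢ ∈ ℝ^n and gᵢ := N'(z̃ᵢ) ∈ ℝ^n (for a differentiable N : ℝ^n → ℝ) satisfying: zᵢ = zⁿ + Δt • ∑ⱼ a i j • kⱼ; kᵢ = S(L zᵢ) + λ • S gᵢ; z^{n+1} = zⁿ + Δt • ∑ᵢ b i • kᵢ; and N(z^{n+1}) = N(zⁿ) + λ * Δt * ∑ᵢ b i * ⟪gᵢ, kᵢ⟫. Then (1/2)⟪z^{n+1},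 L z^{n+1}⟫ + N(z^{n+1}) = (1/2)⟪zⁿ, L zⁿ⟫ + N(zⁿ). -/
open scoped RealInnerProductSpace

/-- Energy conservation (Theorem 2.5) of the high-order Lagrange-multiplier
symplectic Runge–Kutta scheme LM-GAUSS. -/
theorem stmt5 {n : ℕ} (s : ℕ)
    (a : Fin s → Fin s → ℝ) (b : Fin s → ℝ)
    (hsymp : ∀ i j, b i * b j - b i * a i j - b j * a j i = 0)
    (S L : EuclideanSpace ℝ (Fin n) →L[ℝ] EuclideanSpace ℝ (Fin n))
    (hS : ∀ x y, ⟪S x, y⟫ = -⟪x, S y⟫)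
    (hL : ∀ x y, ⟪L x, y⟫ = ⟪x, L y⟫)
    (Δt lam : ℝ)
    (N : EuclideanSpace ℝ (Fin n) → ℝ)
    (N' : EuclideanSpace ℝ (Fin n) → EuclideanSpace ℝ (Fin n))
    (hN : ∀ x, HasGradientAt N (N' x) x)
    (zn zn1 : EuclideanSpace ℝ (Fin n))
    (zi ki zti : Fin s → EuclideanSpace ℝ (Fin n))
    (hzi : ∀ i, zi i = zn + Δt • ∑ j, a i j • ki j)
    (hki : ∀ i, ki i = S (L (zi i)) + lam • S (N' (zti i)))
    (hzn1 : zn1 = zn + Δt • ∑ i, b i • ki i)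
    (hNupd : N zn1 = N zn + lam * Δt * ∑ i, b i * ⟪N' (zti i), ki i⟫) :
    (1 / 2 : ℝ) * ⟪zn1, L zn1⟫ + N zn1 = (1 / 2 : ℝ) * ⟪zn, L zn⟫ + N zn := by
  set K : EuclideanSpace ℝ (Fin n) := ∑ i, b i • ki i with hK
  set c : Fin s → Fin s → ℝ := fun i j => ⟪ki i, L (ki j)⟫ with hc
  have hc_symm : ∀ i j, c i j = c j i := by
    intro i j
    simp only [hc]
    rw [real_inner_comm, hL]
  -- key orthogonality
  have hkey : ∀ i, ⟪ki i, L (zi i)⟫ = -(lam * ⟪ki i, N' (zti i)⟫) := by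
    intro i
    set w : EuclideanSpace ℝ (Fin n) := L (zi i) + lam • N' (zti i) with hw
    have hki' : ki i = S w := by
      rw [hki i, hw, map_add, map_smul]
    have h0 : ⟪S w, w⟫ = 0 := by
      have h1 := hS w w
      have h2 : ⟪w, S w⟫ = ⟪S w, w⟫ := real_inner_comm _ _
      linarith
    rw [hki'] at *
    have := h0
    rw [hw, inner_add_right, real_inner_smul_right] at this
    linarith
  -- expansion of the quadratic form
  have h1 : ⟪zn, L K⟫ = ⟪K, L zn⟫ := by rw [real_inner_comm, hL]
  have expand : ⟪zn1, L zn1⟫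
      = ⟪zn, L zn⟫ + 2 * Δt * ⟪K, L zn⟫ + Δt ^ 2 * ⟪K, L K⟫ := by
    rw [hzn1]
    simp only [map_add, map_smul, inner_add_left, inner_add_right,
      real_inner_smul_left, real_inner_smul_right]
    linear_combination Δt * h1
  have hKzn : ⟪K, L zn⟫ = ∑ i, b i * ⟪ki i, L zn⟫ := by
    rw [hK, sum_inner]
    exact Finset.sum_congr rfl fun i _ => real_inner_smul_left _ _ _
  have hkiLzn : ∀ i, ⟪ki i, L zn⟫
      = -(lam * ⟪ki i, N' (zti i)⟫) - Δt * ∑ j, a i j * c i j := by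
    intro i
    have hz : L (zi i) = L zn + Δt • ∑ j, a i j • L (ki j) := by
      rw [hzi i, map_add, map_smul, map_sum]
      simp [map_smul]
    have : ⟪ki i, L (zi i)⟫ = ⟪ki i, L zn⟫ + Δt * ∑ j, a i j * c i j := by
      rw [hz, inner_add_right, real_inner_smul_right, inner_sum]
      simp only [real_inner_smul_right, hc]
    rw [hkey i] at this
    linarith
  have hKLK : ⟪K, L K⟫ = ∑ i, ∑ j, b i * b j * c i j := by
    rw [hK, map_sum, sum_inner]
    refine Finset.sum_congr rfl fun i _ => ?_
    rw [real_inner_smul_left, inner_sum]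
    rw [Finset.mul_sum]
    refine Finset.sum_congr rfl fun j _ => ?_
    rw [map_smul, real_inner_smul_right, hc]
    ring
  -- swap identity
  have hswap : ∑ i, ∑ j, b i * a i j * c i j = ∑ i, ∑ j, b j * a j i * c i j := by
    rw [Finset.sum_comm]
    refine Finset.sum_congr rfl fun i _ => Finset.sum_congr rfl fun j _ => ?_
    rw [hc_symm]
  have hcancel : ∑ i, ∑ j, b i * b j * c i j
      = 2 * ∑ i, ∑ j, b i * a i j * c i j := by
    have h := fun i j => hsymp i j
    have : ∑ i, ∑ j, (b i * b j - b i * a i j - b j * a j i) * c i j = 0 := by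
      simp only [fun i j => hsymp i j, zero_mul, Finset.sum_const_zero]
    have hexp : ∑ i, ∑ j, (b i * b j - b i * a i j - b j * a j i) * c i j
        = ∑ i, ∑ j, b i * b j * c i j - ∑ i, ∑ j, b i * a i j * c i j
          - ∑ i, ∑ j, b j * a j i * c i j := by
      rw [← Finset.sum_sub_distrib, ← Finset.sum_sub_distrib]
      refine Finset.sum_congr rfl fun i _ => ?_
      rw [← Finset.sum_sub_distrib, ← Finset.sum_sub_distrib]
      refine Finset.sum_congr rfl fun j _ => by ring
    rw [hexp] at this
    linarith [hswap]
  -- put it together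
  have hsum1 : ∑ i, b i * ⟪ki i, L zn⟫
      = -(lam * ∑ i, b i * ⟪ki i, N' (zti i)⟫)
        - Δt * ∑ i, ∑ j, b i * a i j * c i j := by
    have per : ∀ i, b i * ⟪ki i, L zn⟫
        = -(lam * (b i * ⟪ki i, N' (zti i)⟫)) - Δt * ∑ j, b i * a i j * c i j := by
      intro i
      have h2 : b i * ∑ j, a i j * c i j = ∑ j, b i * a i j * c i j := by
        rw [Finset.mul_sum]
        exact Finset.sum_congr rfl fun j _ => by ring
      rw [hkiLzn i]
      linear_combination -Δt * h2
    rw [Finset.sum_congr rfl fun i _ => per i, Finset.sum_sub_distrib]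
    congr 1
    · rw [Finset.mul_sum, ← Finset.sum_neg_distrib]
    · rw [Finset.mul_sum]
  have hNsum : ∑ i, b i * ⟪N' (zti i), ki i⟫ = ∑ i, b i * ⟪ki i, N' (zti i)⟫ := by
    refine Finset.sum_congr rfl fun i _ => by rw [real_inner_comm]
  rw [hNupd, hNsum]
  rw [expand, hKzn, hsum1, hKLK, hcancel]
  ring
end

section
/- Let s ∈ ℕ, a : Fin s → Fin s → ℝ, b : Fin s → ℝ with b i * b j = b i * a i j + b j * a j i for all i, j. Let L : ℝ^n →L[ℝ] ℝ^n be symmetric, Δt ∈ ℝ, zⁿ ∈ ℝ^n, and kᵢ, zᵢ ∈ ℝ^n satisfy zᵢ = zⁿ + Δt • ∑ⱼ a i j • kⱼ for all i. Set z^{n+1} = zⁿ + Δt • ∑ᵢ b i • kᵢ. Then ⟪z^{n+1}, L z^{n+1}⟫ = ⟪zⁿ, L zⁿ⟫ + 2Δt ∑ᵢ b i * ⟪kᵢ, L zᵢ⟫. -/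
open scoped RealInnerProductSpace

/-- The key algebraic identity for symplectic RK methods: the symplecticity
condition eliminates the quadratic-in-`Δt` cross terms in the expansion of the
quadratic form `z ↦ ⟪z, L z⟫`. -/
theorem stmt6 {n : ℕ} (s : ℕ)
    (a : Fin s → Fin s → ℝ) (b : Fin s → ℝ)
    (hsymp : ∀ i j, b i * b j = b i * a i j + b j * a j i)
    (L : EuclideanSpace ℝ (Fin n) →L[ℝ] EuclideanSpace ℝ (Fin n))
    (hL : ∀ x y, ⟪L x, y⟫ = ⟪x, L y⟫)
    (Δt : ℝ) (zn : EuclideanSpace ℝ (Fin n))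
    (ki zi : Fin s → EuclideanSpace ℝ (Fin n))
    (hzi : ∀ i, zi i = zn + Δt • ∑ j, a i j • ki j)
    (zn1 : EuclideanSpace ℝ (Fin n))
    (hzn1 : zn1 = zn + Δt • ∑ i, b i • ki i) :
    ⟪zn1, L zn1⟫ = ⟪zn, L zn⟫ + 2 * Δt * ∑ i, b i * ⟪ki i, L (zi i)⟫ := by
  have Bsymm : ∀ x y : EuclideanSpace ℝ (Fin n), ⟪x, L y⟫ = ⟪y, L x⟫ := by
    intro x y
    rw [← hL, real_inner_comm]
  set K : EuclideanSpace ℝ (Fin n) := ∑ i, b i • ki i with hK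
  have hKz : ⟪K, L zn⟫ = ∑ i, b i * ⟪ki i, L zn⟫ := by
    rw [hK, sum_inner]
    exact Finset.sum_congr rfl fun i _ => real_inner_smul_left _ _ _
  have hKK : ⟪K, L K⟫ = ∑ i, ∑ j, b i * (b j * ⟪ki i, L (ki j)⟫) := by
    rw [hK, sum_inner]
    refine Finset.sum_congr rfl fun i _ => ?_
    rw [real_inner_smul_left, map_sum, inner_sum, Finset.mul_sum]
    refine Finset.sum_congr rfl fun j _ => ?_
    rw [map_smul, real_inner_smul_right]
  have hLHS : ⟪zn + Δt • K, L (zn + Δt • K)⟫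
      = ⟪zn, L zn⟫ + 2 * Δt * ⟪K, L zn⟫ + Δt ^ 2 * ⟪K, L K⟫ := by
    simp only [map_add, map_smul, inner_add_left, inner_add_right,
      real_inner_smul_left, real_inner_smul_right]
    rw [Bsymm zn K]
    ring
  have hRHS : ∀ i, ⟪ki i, L (zi i)⟫
      = ⟪ki i, L zn⟫ + Δt * ∑ j, a i j * ⟪ki i, L (ki j)⟫ := by
    intro i
    rw [hzi i, map_add, map_smul, inner_add_right, real_inner_smul_right,
      map_sum, inner_sum]
    refine congrArg _ (congrArg _ (Finset.sum_congr rfl fun j _ => ?_))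
    rw [map_smul, real_inner_smul_right]
  rw [hzn1, hLHS, hKz, hKK]
  simp only [hRHS]
  have hdouble : ∑ i, ∑ j, b i * (b j * ⟪ki i, L (ki j)⟫)
      = 2 * ∑ i, ∑ j, b i * (a i j * ⟪ki i, L (ki j)⟫) := by
    have h1 : ∑ i, ∑ j, b i * (b j * ⟪ki i, L (ki j)⟫)
        = ∑ i, ∑ j, (b i * (a i j * ⟪ki i, L (ki j)⟫)
            + b j * (a j i * ⟪ki i, L (ki j)⟫)) := by
      refine Finset.sum_congr rfl fun i _ => Finset.sum_congr rfl fun j _ => ?_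
      rw [← mul_assoc, ← mul_assoc, ← mul_assoc, hsymp i j]; ring
    rw [h1]
    simp only [Finset.sum_add_distrib]
    have h2 : ∑ i, ∑ j, b j * (a j i * ⟪ki i, L (ki j)⟫)
        = ∑ i, ∑ j, b i * (a i j * ⟪ki i, L (ki j)⟫) := by
      rw [Finset.sum_comm]
      refine Finset.sum_congr rfl fun i _ => Finset.sum_congr rfl fun j _ => ?_
      rw [Bsymm (ki j) (ki i)]
    rw [h2]; ring
  rw [hdouble]
  simp only [mul_add, Finset.mul_sum, Finset.sum_add_distrib]
  rw [add_assoc]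
  refine congrArg _ (congrArg _ (Finset.sum_congr rfl fun i _ =>
    Finset.sum_congr rfl fun j _ => ?_))
  ring
end

section
/- Let f₁, f₂ : ℝ^n → ℝ^n be smooth (C^∞), s ∈ ℕ, a : Fin s → Fin s → ℝ, and zⁿ ∈ ℝ^n. For each Δt small, let (zᵢ(Δt), kᵢ(Δt)) solve the implicit RK stage equations zᵢ = zⁿ + Δt ∑ⱼ a i j • kⱼ, kᵢ = f₁(zᵢ) + f₂(zᵢ), and let (zᵢ,₍ₘ₎(Δt)) be defined by zᵢ,₍₀₎ = zⁿ and the linearly implicit recursion zᵢ,₍ₘ₊₁₎ = zⁿ + Δt ∑ⱼ a i j • kⱼ,₍ₘ₊₁₎ with kᵢ,₍ₘ₊₁₎ = f₁(zᵢ,₍ₘ₊₁₎) + f₂(zᵢ,₍ₘ₎). Assume these maps are C^∞ in Δt near 0. Then for each m and i, zᵢ,₍ₘ₎(Δt) - zᵢ(Δt) = O(Δt^{m+1}) as Δt → 0, i.e., the first m derivatives in Δt of the difference vanish at Δt = 0. -/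
open Filter Set
open scoped Topology

variable {E : Type*} [NormedAddCommGroup E] [NormedSpace ℝ E]

private lemma contDiffAt_top_deriv' {g : ℝ → E} {x : ℝ} (hg : ContDiffAt ℝ (⊤ : ℕ∞) g x) :
    ContDiffAt ℝ (⊤ : ℕ∞) (deriv g) x := by
  have h : ContDiffAt ℝ (⊤ : ℕ∞) (fderiv ℝ g) x := hg.fderiv_right (by simp)
  exact (ContinuousLinearMap.apply ℝ E (1:ℝ)).contDiff.contDiffAt.comp x h

private lemma bound_of_deriv_bound' {φ : ℝ → E} {C : ℝ} {q : ℕ}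
    (hC : 0 ≤ C) (hφ : ContDiffAt ℝ (⊤ : ℕ∞) φ 0) (hφ0 : φ 0 = 0)
    (hd : ∀ᶠ t in 𝓝 (0:ℝ), ‖deriv φ t‖ ≤ C * |t| ^ q) :
    ∀ᶠ t in 𝓝 (0:ℝ), ‖φ t‖ ≤ C * |t| ^ (q + 1) := by
  have hdiff : ∀ᶠ s in 𝓝 (0:ℝ), DifferentiableAt ℝ φ s := by
    have h1 : ContDiffAt ℝ 1 φ 0 := hφ.of_le (by simp)
    filter_upwards [h1.eventually (by simp)] with s hs
    exact hs.differentiableAt one_ne_zero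
  rcases Metric.eventually_nhds_iff.1 (hdiff.and hd) with ⟨δ, hδ, H⟩
  rw [Metric.eventually_nhds_iff]
  refine ⟨δ, hδ, fun t ht => ?_⟩
  have habs : ∀ x : ℝ, x ∈ Icc (-|t|) |t| → dist x 0 < δ := by
    intro x hx
    rw [Real.dist_eq, sub_zero]
    calc |x| ≤ |t| := abs_le.2 ⟨hx.1, hx.2⟩
      _ < δ := by rwa [Real.dist_eq, sub_zero] at ht
  have key : ∀ x ∈ Icc (-|t|) |t|,
      HasDerivWithinAt φ (deriv φ x) (Icc (-|t|) |t|) x := fun x hx =>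
    ((H (habs x hx)).1.hasDerivAt).hasDerivWithinAt
  have bound : ∀ x ∈ Icc (-|t|) |t|, ‖deriv φ x‖ ≤ C * |t| ^ q := by
    intro x hx
    refine le_trans (H (habs x hx)).2 ?_
    exact mul_le_mul_of_nonneg_left
      (pow_le_pow_left₀ (abs_nonneg _) (abs_le.2 ⟨hx.1, hx.2⟩) q) hC
  have h0mem : (0:ℝ) ∈ Icc (-|t|) |t| := ⟨neg_nonpos.2 (abs_nonneg t), abs_nonneg t⟩
  have htmem : t ∈ Icc (-|t|) |t| := ⟨neg_abs_le t, le_abs_self t⟩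
  have := (convex_Icc (-|t|) |t|).norm_image_sub_le_of_norm_hasDerivWithin_le
    key bound h0mem htmem
  rw [hφ0, sub_zero] at this
  calc ‖φ t‖ ≤ C * |t| ^ q * ‖t - 0‖ := this
    _ = C * |t| ^ (q + 1) := by
      rw [sub_zero, Real.norm_eq_abs, pow_succ, mul_assoc]

private lemma taylor_bound' {g : ℝ → E} (q : ℕ) (hg : ContDiffAt ℝ (⊤ : ℕ∞) g 0)
    (h0 : ∀ j < q, iteratedDeriv j g 0 = 0) :
    ∃ C, 0 ≤ C ∧ ∀ᶠ t in 𝓝 (0:ℝ),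
      ‖g t - t ^ q • ((q.factorial : ℝ)⁻¹ • iteratedDeriv q g 0)‖ ≤ C * |t| ^ (q + 1) := by
  induction q generalizing g with
  | zero =>
    refine ⟨‖deriv g 0‖ + 1, by positivity, ?_⟩
    have hφ : ContDiffAt ℝ (⊤ : ℕ∞) (fun t => g t - g 0) 0 := hg.sub contDiffAt_const
    have hcont : ContinuousAt (deriv g) 0 := (contDiffAt_top_deriv' hg).continuousAt
    have hev : ∀ᶠ t in 𝓝 (0:ℝ), ‖deriv (fun u => g u - g 0) t‖ ≤ (‖deriv g 0‖ + 1) * |t| ^ 0 := by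
      have : ∀ᶠ t in 𝓝 (0:ℝ), ‖deriv g t‖ ≤ ‖deriv g 0‖ + 1 := by
        have := hcont.eventually (Metric.ball_mem_nhds (deriv g 0) one_pos)
        filter_upwards [this] with t ht
        have hb := le_of_lt (mem_ball_iff_norm.1 ht)
        calc ‖deriv g t‖ ≤ ‖deriv g 0‖ + ‖deriv g t - deriv g 0‖ := norm_le_insert' _ _
          _ ≤ ‖deriv g 0‖ + 1 := by linarith
      filter_upwards [this] with t ht
      simpa [deriv_sub_const] using ht
    have := bound_of_deriv_bound' (by positivity) hφ (by simp) hev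
    filter_upwards [this] with t ht
    simpa [iteratedDeriv_zero] using ht
  | succ q ih =>
    set d : E := (((q+1).factorial : ℝ))⁻¹ • iteratedDeriv (q+1) g 0 with hd_def
    have hg' : ContDiffAt ℝ (⊤ : ℕ∞) (deriv g) 0 := contDiffAt_top_deriv' hg
    have h0' : ∀ j < q, iteratedDeriv j (deriv g) 0 = 0 := by
      intro j hj
      rw [← iteratedDeriv_succ']
      exact h0 (j+1) (by omega)
    obtain ⟨C, hC0, hC⟩ := ih hg' h0'
    refine ⟨C, hC0, ?_⟩
    set φ : ℝ → E := fun t => g t - t ^ (q+1) • d with hφ_def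
    have hpoly : ContDiff ℝ (⊤ : ℕ∞) (fun t : ℝ => t ^ (q+1) • d) :=
      (contDiff_id.pow _).smul contDiff_const
    have hφsm : ContDiffAt ℝ (⊤ : ℕ∞) φ 0 := hg.sub hpoly.contDiffAt
    have hφ0 : φ 0 = 0 := by
      have hg0 : g 0 = 0 := by simpa [iteratedDeriv_zero] using h0 0 (by omega)
      simp [hφ_def, hg0]
    have hdiffg : ∀ᶠ s in 𝓝 (0:ℝ), DifferentiableAt ℝ g s := by
      have h1 : ContDiffAt ℝ 1 g 0 := hg.of_le (by simp)
      filter_upwards [h1.eventually (by simp)] with s hs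
      exact hs.differentiableAt one_ne_zero
    have hderφ : ∀ᶠ t in 𝓝 (0:ℝ),
        deriv φ t = deriv g t - t ^ q • ((q.factorial : ℝ)⁻¹ • iteratedDeriv q (deriv g) 0) := by
      filter_upwards [hdiffg] with t ht
      have hpd : HasDerivAt (fun u : ℝ => u ^ (q+1) • d) ((((q:ℝ)+1) * t ^ q) • d) t := by
        simpa using (hasDerivAt_pow (q+1) t).smul_const d
      have : HasDerivAt φ (deriv g t - (((q:ℝ)+1) * t ^ q) • d) t :=
        ht.hasDerivAt.sub hpd
      rw [this.deriv]
      congr 1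
      rw [← iteratedDeriv_succ', hd_def, smul_smul, smul_smul]
      congr 1
      have h1 : (0:ℝ) < q.factorial := by exact_mod_cast q.factorial_pos
      rw [Nat.factorial_succ]
      push_cast
      field_simp
    filter_upwards [hC, hderφ,
      bound_of_deriv_bound' hC0 hφsm hφ0 (by
        filter_upwards [hC, hderφ] with t h1 h2
        rw [h2]; exact h1)] with t h1 h2 h3
    simpa [hφ_def] using h3

private lemma bigO_of_vanish' {g : ℝ → E} {m : ℕ} (hg : ContDiffAt ℝ (⊤ : ℕ∞) g 0)
    (h0 : ∀ j ≤ m, iteratedDeriv j g 0 = 0) :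
    ∃ C, 0 ≤ C ∧ ∀ᶠ t in 𝓝 (0:ℝ), ‖g t‖ ≤ C * |t| ^ (m + 1) := by
  obtain ⟨C, hC0, hC⟩ := taylor_bound' (m+1) hg (fun j hj => h0 j (by omega))
  set d : E := (((m+1).factorial : ℝ))⁻¹ • iteratedDeriv (m+1) g 0
  refine ⟨C + ‖d‖, by positivity, ?_⟩
  have hsmall : ∀ᶠ t in 𝓝 (0:ℝ), |t| ≤ 1 := by
    have : Icc (-1:ℝ) 1 ∈ 𝓝 (0:ℝ) := Icc_mem_nhds (by norm_num) (by norm_num)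
    filter_upwards [this] with t ht
    exact abs_le.2 ⟨ht.1, ht.2⟩
  filter_upwards [hC, hsmall] with t h1 h2
  have hnn : (0:ℝ) ≤ |t| ^ (m+1) := by positivity
  have hpow : |t| ^ (m+2) ≤ |t| ^ (m+1) :=
    pow_le_pow_of_le_one (abs_nonneg t) h2 (by omega)
  have hns : ‖t ^ (m+1) • d‖ = |t| ^ (m+1) * ‖d‖ := by
    rw [norm_smul, Real.norm_eq_abs, abs_pow]
  calc ‖g t‖ ≤ ‖t ^ (m+1) • d‖ + ‖g t - t ^ (m+1) • d‖ := norm_le_insert' _ _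
    _ ≤ |t| ^ (m+1) * ‖d‖ + C * |t| ^ (m+2) := by rw [hns]; gcongr
    _ ≤ |t| ^ (m+1) * ‖d‖ + C * |t| ^ (m+1) := by gcongr
    _ = (C + ‖d‖) * |t| ^ (m+1) := by ring

private lemma vanish_of_bigO' {g : ℝ → E} {m : ℕ} (hg : ContDiffAt ℝ (⊤ : ℕ∞) g 0)
    {C : ℝ} (hC : 0 ≤ C) (hb : ∀ᶠ t in 𝓝 (0:ℝ), ‖g t‖ ≤ C * |t| ^ (m + 1)) :
    ∀ q ≤ m, iteratedDeriv q g 0 = 0 := by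
  intro q
  induction q using Nat.strong_induction_on with
  | _ q ih =>
    intro hq
    have h0 : ∀ j < q, iteratedDeriv j g 0 = 0 := fun j hj => ih j hj (by omega)
    obtain ⟨C', hC'0, hT⟩ := taylor_bound' q hg h0
    set d : E := ((q.factorial : ℝ))⁻¹ • iteratedDeriv q g 0 with hd_def
    have hsmall : ∀ᶠ t in 𝓝 (0:ℝ), |t| ≤ 1 := by
      have : Icc (-1:ℝ) 1 ∈ 𝓝 (0:ℝ) := Icc_mem_nhds (by norm_num) (by norm_num)
      filter_upwards [this] with t ht
      exact abs_le.2 ⟨ht.1, ht.2⟩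
    have key : ∀ᶠ t in 𝓝[≠] (0:ℝ), ‖d‖ ≤ (C + C') * |t| := by
      have : ∀ᶠ t in 𝓝 (0:ℝ), t ≠ 0 → ‖d‖ ≤ (C + C') * |t| := by
        filter_upwards [hb, hT, hsmall] with t h1 h2 h3 ht0
        have habs : (0:ℝ) < |t| := abs_pos.2 ht0
        have hpow : |t| ^ (m+1) ≤ |t| ^ (q+1) :=
          pow_le_pow_of_le_one (abs_nonneg t) h3 (by omega)
        have h4 : ‖t ^ q • d‖ ≤ (C + C') * |t| ^ (q+1) := by
          calc ‖t ^ q • d‖ ≤ ‖g t‖ + ‖t ^ q • d - g t‖ := norm_le_insert' _ _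
            _ = ‖g t‖ + ‖g t - t ^ q • d‖ := by rw [norm_sub_rev]
            _ ≤ C * |t| ^ (m+1) + C' * |t| ^ (q+1) := add_le_add h1 h2
            _ ≤ C * |t| ^ (q+1) + C' * |t| ^ (q+1) :=
                add_le_add (mul_le_mul_of_nonneg_left hpow hC) le_rfl
            _ = (C + C') * |t| ^ (q+1) := by ring
        rw [norm_smul, Real.norm_eq_abs, abs_pow] at h4
        rw [pow_succ] at h4
        have hpq : (0:ℝ) < |t| ^ q := pow_pos habs q
        calc ‖d‖ = (|t| ^ q * ‖d‖) / |t| ^ q := by field_simp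
          _ ≤ ((C + C') * (|t| ^ q * |t|)) / |t| ^ q := by gcongr
          _ = (C + C') * |t| := by field_simp
      exact (eventually_nhdsWithin_of_eventually_nhds this).mp
        (eventually_mem_nhdsWithin.mono fun t ht h => h ht)
    have hd0 : ‖d‖ ≤ 0 := by
      have htend : Tendsto (fun t : ℝ => (C + C') * |t|) (𝓝[≠] (0:ℝ)) (𝓝 0) := by
        have : Tendsto (fun t : ℝ => (C + C') * |t|) (𝓝 (0:ℝ)) (𝓝 ((C + C') * |0|)) :=
          (continuous_const.mul continuous_abs).tendsto 0
        simpa using this.mono_left nhdsWithin_le_nhds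
      exact ge_of_tendsto htend key
    have : d = 0 := by
      rw [← norm_le_zero_iff]; exact hd0
    rw [hd_def, smul_eq_zero] at this
    rcases this with h | h
    · exact absurd h (by positivity)
    · exact h

/-- Each sweep of the linearly implicit prediction iteration gains one order of
accuracy in `Δt` toward the fully implicit RK stage values: the first `m`
derivatives in `Δt` of `zᵢ,₍ₘ₎ - zᵢ` vanish at `Δt = 0`. -/
theorem stmt9 {n : ℕ} (s : ℕ)
    (f₁ f₂ : EuclideanSpace ℝ (Fin n) → EuclideanSpace ℝ (Fin n))
    (hf₁ : ContDiff ℝ (⊤ : ℕ∞) f₁) (hf₂ : ContDiff ℝ (⊤ : ℕ∞) f₂)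
    (a : Fin s → Fin s → ℝ) (zn : EuclideanSpace ℝ (Fin n))
    -- fully implicit RK stage values, as functions of `Δt`
    (z k : Fin s → ℝ → EuclideanSpace ℝ (Fin n))
    (hz : ∀ i Δt, z i Δt = zn + Δt • ∑ j, a i j • k j Δt)
    (hk : ∀ i Δt, k i Δt = f₁ (z i Δt) + f₂ (z i Δt))
    -- linearly implicit prediction sweeps, as functions of `Δt`
    (zm km : ℕ → Fin s → ℝ → EuclideanSpace ℝ (Fin n))
    (hzm0 : ∀ i Δt, zm 0 i Δt = zn)
    (hzm : ∀ m i Δt, zm (m + 1) i Δt = zn + Δt • ∑ j, a i j • km (m + 1) j Δt)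
    (hkm : ∀ m i Δt, km (m + 1) i Δt = f₁ (zm (m + 1) i Δt) + f₂ (zm m i Δt))
    -- smoothness in `Δt` near `0`
    (hzsmooth : ∀ i, ContDiffAt ℝ (⊤ : ℕ∞) (z i) 0)
    (hzmsmooth : ∀ m i, ContDiffAt ℝ (⊤ : ℕ∞) (zm m i) 0) :
    ∀ m (i : Fin s) (q : ℕ), q ≤ m →
      iteratedDeriv q (fun Δt => zm m i Δt - z i Δt) 0 = 0 := by
  classical
  have hz0 : ∀ i, z i 0 = zn := fun i => by rw [hz]; simp
  have hzm0' : ∀ m i, zm m i 0 = zn := by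
    intro m i
    cases m with
    | zero => exact hzm0 i 0
    | succ m => rw [hzm]; simp
  have hkcont : ∀ i, ContinuousAt (k i) 0 := by
    intro i
    have hke : k i = fun t => f₁ (z i t) + f₂ (z i t) := funext (hk i)
    rw [hke]
    exact ((hf₁.continuous.continuousAt).comp (hzsmooth i).continuousAt).add
      ((hf₂.continuous.continuousAt).comp (hzsmooth i).continuousAt)
  obtain ⟨K₁, t₁, ht₁, hL₁⟩ :=
    (hf₁.contDiffAt (x := zn) |>.of_le (by simp)).exists_lipschitzOnWith
  obtain ⟨K₂, t₂, ht₂, hL₂⟩ :=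
    (hf₂.contDiffAt (x := zn) |>.of_le (by simp)).exists_lipschitzOnWith
  have key : ∀ m, ∃ C, 0 ≤ C ∧ ∀ᶠ t in 𝓝 (0:ℝ),
      ∀ j, ‖zm m j t - z j t‖ ≤ C * |t| ^ (m + 1) := by
    intro m
    induction m with
    | zero =>
      set M : ℝ := ∑ j : Fin s, (‖∑ l, a j l • k l 0‖ + 1) with hM
      refine ⟨M, Finset.sum_nonneg fun j _ => add_nonneg (norm_nonneg _) zero_le_one, ?_⟩
      have hev : ∀ᶠ t in 𝓝 (0:ℝ), ∀ j : Fin s, ‖∑ l, a j l • k l t‖ ≤ M := by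
        rw [Filter.eventually_all]
        intro j
        have hc : Filter.Tendsto (fun t => ∑ l, a j l • k l t) (𝓝 0)
            (𝓝 (∑ l, a j l • k l 0)) := by
          apply tendsto_finset_sum
          intro l _
          exact (hkcont l).const_smul (a j l)
        have hMj : ‖∑ l, a j l • k l 0‖ + 1 ≤ M := by
          rw [hM]
          exact Finset.single_le_sum (f := fun p : Fin s => ‖∑ l, a p l • k l 0‖ + 1)
            (fun p _ => by positivity) (Finset.mem_univ j)
        filter_upwards [hc.eventually (Metric.ball_mem_nhds _ one_pos)] with t ht
        have hb := le_of_lt (mem_ball_iff_norm.1 ht)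
        calc ‖∑ l, a j l • k l t‖
            ≤ ‖∑ l, a j l • k l 0‖ + ‖∑ l, a j l • k l t - ∑ l, a j l • k l 0‖ :=
              norm_le_insert' _ _
          _ ≤ M := by linarith
      filter_upwards [hev] with t ht j
      rw [hzm0, hz]
      have heq : zn - (zn + t • ∑ l, a j l • k l t) = -(t • ∑ l, a j l • k l t) := by
        abel
      rw [heq, norm_neg, norm_smul, Real.norm_eq_abs]
      calc |t| * ‖∑ l, a j l • k l t‖ ≤ |t| * M :=
            mul_le_mul_of_nonneg_left (ht j) (abs_nonneg t)
        _ = M * |t| ^ 1 := by ring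
    | succ m ih =>
      obtain ⟨C, hC0, hC⟩ := ih
      set B : ℝ := ∑ j : Fin s, ∑ l : Fin s, |a j l| with hB
      have hB0 : 0 ≤ B := by positivity
      refine ⟨2 * B * K₂ * C, by positivity, ?_⟩
      have hmem₁ : ∀ᶠ t in 𝓝 (0:ℝ), ∀ l : Fin s,
          zm (m+1) l t ∈ t₁ ∧ z l t ∈ t₁ := by
        rw [Filter.eventually_all]
        intro l
        have h1 := (hzmsmooth (m+1) l).continuousAt.eventually_mem
          (by rw [hzm0']; exact ht₁)
        have h2 := (hzsmooth l).continuousAt.eventually_mem (by rw [hz0]; exact ht₁)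
        exact h1.and h2
      have hmem₂ : ∀ᶠ t in 𝓝 (0:ℝ), ∀ l : Fin s,
          zm m l t ∈ t₂ ∧ z l t ∈ t₂ := by
        rw [Filter.eventually_all]
        intro l
        have h1 := (hzmsmooth m l).continuousAt.eventually_mem
          (by rw [hzm0']; exact ht₂)
        have h2 := (hzsmooth l).continuousAt.eventually_mem (by rw [hz0]; exact ht₂)
        exact h1.and h2
      have hsm : ∀ᶠ t in 𝓝 (0:ℝ), |t| * (B * K₁) ≤ 1/2 := by
        have htd : Filter.Tendsto (fun t : ℝ => |t| * (B * K₁)) (𝓝 0) (𝓝 0) := by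
          have this : Filter.Tendsto (fun t : ℝ => |t| * (B * K₁)) (𝓝 0) (𝓝 (|(0:ℝ)| * (B * K₁))) := (continuous_abs.mul (continuous_const (y := B * (K₁:ℝ)))).tendsto (0:ℝ)
          rwa [abs_zero, zero_mul] at this
        filter_upwards [htd.eventually_le_const (show (0:ℝ) < 1/2 by norm_num)] with t ht
        exact ht
      filter_upwards [hmem₁, hmem₂, hC, hsm] with t h1 h2 h3 h4 j
      set e : Fin s → EuclideanSpace ℝ (Fin n) := fun l => zm (m+1) l t - z l t with he
      set S : ℝ := ∑ l, ‖e l‖ with hS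
      have hS0 : 0 ≤ S := Finset.sum_nonneg fun l _ => norm_nonneg _
      have heS : ∀ l, ‖e l‖ ≤ S :=
        fun l => Finset.single_le_sum (fun p _ => norm_nonneg (e p)) (Finset.mem_univ l)
      set X : ℝ := K₁ * S + K₂ * (C * |t| ^ (m+1)) with hX
      have hX0 : 0 ≤ X := by positivity
      -- bound on the k-differences
      have hkdiff : ∀ p, ‖km (m+1) p t - k p t‖ ≤ X := by
        intro p
        rw [hkm, hk]
        have heq : f₁ (zm (m+1) p t) + f₂ (zm m p t) - (f₁ (z p t) + f₂ (z p t))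
            = (f₁ (zm (m+1) p t) - f₁ (z p t)) + (f₂ (zm m p t) - f₂ (z p t)) := by abel
        rw [heq]
        have hb1 : ‖f₁ (zm (m+1) p t) - f₁ (z p t)‖ ≤ K₁ * ‖e p‖ := by
          rw [← dist_eq_norm, ← dist_eq_norm]
          exact hL₁.dist_le_mul _ (h1 p).1 _ (h1 p).2
        have hb2 : ‖f₂ (zm m p t) - f₂ (z p t)‖ ≤ K₂ * (C * |t| ^ (m+1)) := by
          rw [← dist_eq_norm]
          calc dist (f₂ (zm m p t)) (f₂ (z p t)) ≤ K₂ * dist (zm m p t) (z p t) :=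
                hL₂.dist_le_mul _ (h2 p).1 _ (h2 p).2
            _ ≤ K₂ * (C * |t| ^ (m+1)) := by
                rw [dist_eq_norm]
                exact mul_le_mul_of_nonneg_left (h3 p) K₂.coe_nonneg
        calc ‖(f₁ (zm (m+1) p t) - f₁ (z p t)) + (f₂ (zm m p t) - f₂ (z p t))‖
            ≤ ‖f₁ (zm (m+1) p t) - f₁ (z p t)‖ + ‖f₂ (zm m p t) - f₂ (z p t)‖ :=
              norm_add_le _ _
          _ ≤ K₁ * ‖e p‖ + K₂ * (C * |t| ^ (m+1)) := add_le_add hb1 hb2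
          _ ≤ X := by
              rw [hX]
              have := mul_le_mul_of_nonneg_left (heS p) K₁.coe_nonneg
              linarith
      have heqe : ∀ l, e l = t • ∑ p, a l p • (km (m+1) p t - k p t) := by
        intro l
        show zm (m+1) l t - z l t = _
        rw [hzm, hz, add_sub_add_left_eq_sub, ← smul_sub, ← Finset.sum_sub_distrib]
        congr 1
        exact Finset.sum_congr rfl fun p _ => (smul_sub _ _ _).symm
      have hej : ∀ l, ‖e l‖ ≤ |t| * ((∑ p, |a l p|) * X) := by
        intro l
        rw [heqe l, norm_smul, Real.norm_eq_abs]
        refine mul_le_mul_of_nonneg_left ?_ (abs_nonneg t)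
        calc ‖∑ p, a l p • (km (m+1) p t - k p t)‖
            ≤ ∑ p, ‖a l p • (km (m+1) p t - k p t)‖ := norm_sum_le _ _
          _ ≤ ∑ p, |a l p| * X := by
              apply Finset.sum_le_sum
              intro p _
              rw [norm_smul, Real.norm_eq_abs]
              exact mul_le_mul_of_nonneg_left (hkdiff p) (abs_nonneg _)
          _ = (∑ p, |a l p|) * X := by rw [Finset.sum_mul]
      have hsum : S ≤ |t| * (B * X) := by
        rw [hS, hB]
        calc ∑ l, ‖e l‖ ≤ ∑ l, |t| * ((∑ p, |a l p|) * X) :=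
              Finset.sum_le_sum fun l _ => hej l
          _ = |t| * ((∑ l : Fin s, ∑ p : Fin s, |a l p|) * X) := by
              rw [← Finset.mul_sum, ← Finset.sum_mul]
      have h8 : |t| * |t| ^ (m+1) = |t| ^ (m+2) := by
        rw [pow_succ]; ring
      have h9 : S ≤ (1/2) * S + B * K₂ * C * |t| ^ (m+2) := by
        have h5 : |t| * (B * X) = (|t| * (B * K₁)) * S
            + (B * K₂ * C) * (|t| * |t| ^ (m+1)) := by rw [hX]; ring
        have h6 : (|t| * (B * K₁)) * S ≤ (1/2) * S := mul_le_mul_of_nonneg_right h4 hS0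
        rw [h5, h8] at hsum
        linarith
      have hfin : S ≤ 2 * B * K₂ * C * |t| ^ (m+2) := by linarith
      calc ‖zm (m+1) j t - z j t‖ ≤ S := heS j
        _ ≤ 2 * B * K₂ * C * |t| ^ (m + 1 + 1) := hfin
  intro m i q hq
  obtain ⟨C, hC0, hC⟩ := key m
  have hsmi : ContDiffAt ℝ (⊤ : ℕ∞) (fun t => zm m i t - z i t) 0 := (hzmsmooth m i).sub (hzsmooth i)
  exact vanish_of_bigO' hsmi hC0 (hC.mono fun t ht => ht i) q hq
end

section
/- Under the assumptions of the previous lemma, additionally let b : Fin s → ℝ with ∑ᵢ b i = 1, and define z^{n+1}(Δt) = zⁿ + Δt ∑ᵢ b i • (f₁(zᵢ) + f₂(zᵢ)) and z₍Λ₎^{n+1}(Δt) = zⁿ + Δt ∑ᵢ b i • kᵢ,₍Λ₎ where kᵢ,₍Λ₎ = f₁(zᵢ,₍Λ₎) + f₂(zᵢ,₍Λ₋₁₎). Then z₍Λ₎^{n+1}(Δt) - z^{n+1}(Δt) = O(Δt^{Λ+1}) as Δt → 0. -/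
open scoped ContDiff

section Aux

variable {F' G' : Type*} [NormedAddCommGroup F'] [NormedSpace ℝ F']
  [NormedAddCommGroup G'] [NormedSpace ℝ G'] {S : Set ℝ}

private lemma auxSum (hsu : UniqueDiffOn ℝ S) (h0 : (0:ℝ) ∈ S) {ι : Type*}
    (u : Finset ι) (g : ι → ℝ → F') {j : ℕ} (h : ∀ l ∈ u, ContDiffOn ℝ j (g l) S) :
    iteratedDerivWithin j (fun t => ∑ l ∈ u, g l t) S 0
      = ∑ l ∈ u, iteratedDerivWithin j (g l) S 0 := by
  simp only [iteratedDerivWithin_eq_iteratedFDerivWithin]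
  rw [show (fun t => ∑ l ∈ u, g l t) = ∑ l ∈ u, g l by funext t; simp [Finset.sum_apply],
    iteratedFDerivWithin_sum_apply hsu h0 (fun l hl => h l hl 0 h0)]
  simp

/-- Multiplying by `t` raises the vanishing order of iterated derivatives at `0` by one. -/
private lemma auxTSmul (hso : IsOpen S) (h0 : (0:ℝ) ∈ S) :
    ∀ (r : ℕ) (C : ℝ → F'), ContDiffOn ℝ (r+1 : ℕ) C S →
      (∀ j ≤ r, iteratedDerivWithin j C S 0 = 0) →
      ∀ j ≤ r + 1, iteratedDerivWithin j (fun t => t • C t) S 0 = 0 := by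
  have hsu : UniqueDiffOn ℝ S := hso.uniqueDiffOn
  intro r
  induction r with
  | zero =>
    intro C hC h0C j hj
    interval_cases j
    · simp
    · have hC0 : DifferentiableAt ℝ C 0 :=
        ((hC.differentiableOn (by norm_num)).differentiableAt (hso.mem_nhds h0))
      have H : HasDerivAt (fun t : ℝ => t • C t) ((0:ℝ) • deriv C 0 + (1:ℝ) • C 0) 0 :=
        (hasDerivAt_id' (0:ℝ)).smul hC0.hasDerivAt
      rw [iteratedDerivWithin_one, H.hasDerivWithinAt.derivWithin (hsu 0 h0)]
      have := h0C 0 le_rfl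
      simp only [iteratedDerivWithin_zero] at this
      simp [this]
  | succ r IH =>
    intro C hC h0C j hj
    match j, hj with
    | 0, _ => simp
    | (j'+1), hj =>
      have hD : ContDiffOn ℝ (r+1 : ℕ) (derivWithin C S) S :=
        hC.derivWithin hsu (by exact_mod_cast le_rfl)
      have heq : Set.EqOn (derivWithin (fun t : ℝ => t • C t) S)
          ((fun t : ℝ => C t) + fun t : ℝ => t • derivWithin C S t) S := by
        intro x hx
        have hCx : DifferentiableAt ℝ C x :=
          ((hC.differentiableOn (by simp)).differentiableAt
            (hso.mem_nhds hx))
        have H : HasDerivAt (fun t : ℝ => t • C t) (x • deriv C x + (1:ℝ) • C x) x :=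
          (hasDerivAt_id' x).smul hCx.hasDerivAt
        rw [H.hasDerivWithinAt.derivWithin (hsu x hx)]
        simp only [Pi.add_apply, one_smul, derivWithin_of_isOpen hso hx]
        exact add_comm _ _
      have hC1 : ContDiffOn ℝ (j' : ℕ) (fun t : ℝ => C t) S :=
        hC.of_le (by exact_mod_cast by omega)
      have hC2 : ContDiffOn ℝ (j' : ℕ) (fun t : ℝ => t • derivWithin C S t) S :=
        (ContDiffOn.smul contDiffOn_id hD).of_le (by exact_mod_cast by omega)
      rw [iteratedDerivWithin_succ', iteratedDerivWithin_congr heq h0,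
        iteratedDerivWithin_add h0 hsu (hC1 0 h0) (hC2 0 h0)]
      have e1 : iteratedDerivWithin j' (fun t : ℝ => C t) S 0 = 0 := h0C j' (by omega)
      have e2 : iteratedDerivWithin j' (fun t : ℝ => t • derivWithin C S t) S 0 = 0 := by
        refine IH (derivWithin C S) hD (fun p hp => ?_) j' (by omega)
        rw [← iteratedDerivWithin_succ']
        exact h0C (p+1) (by omega)
      rw [e1, e2, add_zero]

/-- If two curves have the same iterated derivatives at `0` up to order `r`, so do their
compositions with a smooth map. -/
private lemma auxComp (hso : IsOpen S) (h0 : (0:ℝ) ∈ S) {N r : ℕ} (hrN : r ≤ N)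
    {g : F' → G'} (hg : ContDiff ℝ (N:ℕ) g) {u v : ℝ → F'}
    (hu : ContDiffOn ℝ (N:ℕ) u S) (hv : ContDiffOn ℝ (N:ℕ) v S)
    (huv : ∀ p ≤ r, iteratedDerivWithin p u S 0 = iteratedDerivWithin p v S 0) :
    ∀ p ≤ r, iteratedDerivWithin p (fun t => g (u t)) S 0
      = iteratedDerivWithin p (fun t => g (v t)) S 0 := by
  have hsu : UniqueDiffOn ℝ S := hso.uniqueDiffOn
  have h00 : u 0 = v 0 := by
    have := huv 0 (Nat.zero_le r)
    simpa only [iteratedDerivWithin_zero] using this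
  have hufd : ∀ p ≤ r, iteratedFDerivWithin ℝ p u S 0 = iteratedFDerivWithin ℝ p v S 0 := by
    intro p hp
    rw [iteratedFDerivWithin_eq_equiv_comp, iteratedFDerivWithin_eq_equiv_comp]
    simp only [Function.comp_apply, huv p hp]
  have Hg : HasFTaylorSeriesUpToOn (N:ℕ) g (ftaylorSeriesWithin ℝ g Set.univ) Set.univ :=
    hg.contDiffOn.ftaylorSeriesWithin uniqueDiffOn_univ
  have Hu := Hg.comp (hu.ftaylorSeriesWithin hsu) (Set.mapsTo_univ _ _)
  have Hv := Hg.comp (hv.ftaylorSeriesWithin hsu) (Set.mapsTo_univ _ _)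
  intro p hp
  have hpN : ((p:ℕ) : WithTop ℕ∞) ≤ ((N:ℕ) : WithTop ℕ∞) := by
    exact_mod_cast hp.trans hrN
  have e1 := Hu.eq_iteratedFDerivWithin_of_uniqueDiffOn hpN hsu h0
  have e2 := Hv.eq_iteratedFDerivWithin_of_uniqueDiffOn hpN hsu h0
  have e3 : (ftaylorSeriesWithin ℝ g Set.univ (u 0)).taylorComp
        (ftaylorSeriesWithin ℝ u S 0) p
      = (ftaylorSeriesWithin ℝ g Set.univ (v 0)).taylorComp
        (ftaylorSeriesWithin ℝ v S 0) p := by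
    rw [h00]
    unfold FormalMultilinearSeries.taylorComp
    refine Finset.sum_congr rfl fun c _ => ?_
    unfold FormalMultilinearSeries.compAlongOrderedFinpartition
    congr 1
    funext m
    exact hufd (c.partSize m) ((c.partSize_le m).trans hp)
  have hgu : (fun t => g (u t)) = g ∘ u := rfl
  have hgv : (fun t => g (v t)) = g ∘ v := rfl
  rw [hgu, hgv, iteratedDerivWithin_eq_iteratedFDerivWithin,
    iteratedDerivWithin_eq_iteratedFDerivWithin, ← e1, ← e2, e3]

end Aux

/-- Lemma 2.3: `Λ` prediction sweeps followed by the RK quadrature step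
reproduce the fully implicit RK update to order `Λ + 1` in the time step:
the first `Λ` derivatives in `Δt` of the difference vanish at `Δt = 0`. -/
theorem stmt10 {n : ℕ} (s : ℕ)
    (f₁ f₂ : EuclideanSpace ℝ (Fin n) → EuclideanSpace ℝ (Fin n))
    (hf₁ : ContDiff ℝ (⊤ : ℕ∞) f₁) (hf₂ : ContDiff ℝ (⊤ : ℕ∞) f₂)
    (a : Fin s → Fin s → ℝ) (b : Fin s → ℝ) (hb : ∑ i, b i = 1)
    (zn : EuclideanSpace ℝ (Fin n))
    -- fully implicit RK stage values, as functions of `Δt`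
    (z k : Fin s → ℝ → EuclideanSpace ℝ (Fin n))
    (hz : ∀ i Δt, z i Δt = zn + Δt • ∑ j, a i j • k j Δt)
    (hk : ∀ i Δt, k i Δt = f₁ (z i Δt) + f₂ (z i Δt))
    -- linearly implicit prediction sweeps, as functions of `Δt`
    (zm km : ℕ → Fin s → ℝ → EuclideanSpace ℝ (Fin n))
    (hzm0 : ∀ i Δt, zm 0 i Δt = zn)
    (hzm : ∀ m i Δt, zm (m + 1) i Δt = zn + Δt • ∑ j, a i j • km (m + 1) j Δt)
    (hkm : ∀ m i Δt, km (m + 1) i Δt = f₁ (zm (m + 1) i Δt) + f₂ (zm m i Δt))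
    -- smoothness in `Δt` near `0`
    (hzsmooth : ∀ i, ContDiffAt ℝ (⊤ : ℕ∞) (z i) 0)
    (hzmsmooth : ∀ m i, ContDiffAt ℝ (⊤ : ℕ∞) (zm m i) 0)
    (Λ : ℕ) (hΛ : 1 ≤ Λ)
    -- the fully implicit RK update and the prediction-correction update
    (zRK zPC : ℝ → EuclideanSpace ℝ (Fin n))
    (hzRK : ∀ Δt, zRK Δt = zn + Δt • ∑ i, b i • (f₁ (z i Δt) + f₂ (z i Δt)))
    (hzPC : ∀ Δt, zPC Δt
      = zn + Δt • ∑ i, b i • (f₁ (zm Λ i Δt) + f₂ (zm (Λ - 1) i Δt))) :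
    ∀ q : ℕ, q ≤ Λ → iteratedDeriv q (fun Δt => zPC Δt - zRK Δt) 0 = 0 := by
  classical
  set N : ℕ := Λ + 1 with hN
  have hNe : ((N : ℕ) : WithTop ℕ∞) ≠ ((⊤ : ℕ∞) : WithTop ℕ∞) := by
    exact_mod_cast (ENat.coe_ne_top N)
  -- a common open neighbourhood of `0` on which everything is `C^N`
  have hev : ∀ᶠ t in nhds (0:ℝ), (∀ i, ContDiffAt ℝ N (z i) t) ∧
      (∀ m ∈ Finset.range (Λ+1), ∀ i, ContDiffAt ℝ N (zm m i) t) := by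
    refine Filter.Eventually.and ?_ ?_
    · rw [Filter.eventually_all]
      exact fun i => ((hzsmooth i).of_le (by exact_mod_cast le_top)).eventually hNe
    · rw [Filter.eventually_all_finset]
      intro m _
      rw [Filter.eventually_all]
      exact fun i => ((hzmsmooth m i).of_le (by exact_mod_cast le_top)).eventually hNe
  obtain ⟨S, hSmem, hSo, h0S⟩ := eventually_nhds_iff.mp hev
  have hsu : UniqueDiffOn ℝ S := hSo.uniqueDiffOn
  have hzOn : ∀ i, ContDiffOn ℝ (N:ℕ) (z i) S := fun i x hx =>
    ((hSmem x hx).1 i).contDiffWithinAt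
  have hzmOn : ∀ m, m ≤ Λ → ∀ i, ContDiffOn ℝ (N:ℕ) (zm m i) S := fun m hm i x hx =>
    ((hSmem x hx).2 m (Finset.mem_range.mpr (by omega)) i).contDiffWithinAt
  have hf₁N : ContDiff ℝ (N:ℕ) f₁ := hf₁.of_le (by exact_mod_cast le_top)
  have hf₂N : ContDiff ℝ (N:ℕ) f₂ := hf₂.of_le (by exact_mod_cast le_top)
  -- smoothness of the "defect" functions
  have hWsmooth : ∀ (c : Fin s → ℝ) (m₁ m₂ : ℕ), m₁ ≤ Λ → m₂ ≤ Λ →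
      ContDiffOn ℝ (N:ℕ) (fun t => ∑ l, c l •
        ((f₁ (zm m₁ l t) + f₂ (zm m₂ l t)) - (f₁ (z l t) + f₂ (z l t)))) S := by
    intro c m₁ m₂ hm₁ hm₂
    refine ContDiffOn.sum fun l _ => ContDiffOn.const_smul _ (ContDiffOn.sub ?_ ?_)
    · exact (hf₁N.comp_contDiffOn (hzmOn m₁ hm₁ l)).add
        (hf₂N.comp_contDiffOn (hzmOn m₂ hm₂ l))
    · exact (hf₁N.comp_contDiffOn (hzOn l)).add (hf₂N.comp_contDiffOn (hzOn l))
  -- vanishing of the "defect" functions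
  have hWvanish : ∀ (c : Fin s → ℝ) (m₁ m₂ : ℕ), m₁ ≤ Λ → m₂ ≤ Λ → ∀ r : ℕ, r ≤ Λ →
      (∀ p ≤ r, ∀ l, iteratedDerivWithin p (zm m₁ l) S 0 = iteratedDerivWithin p (z l) S 0) →
      (∀ p ≤ r, ∀ l, iteratedDerivWithin p (zm m₂ l) S 0 = iteratedDerivWithin p (z l) S 0) →
      ∀ j ≤ r, iteratedDerivWithin j (fun t => ∑ l, c l •
        ((f₁ (zm m₁ l t) + f₂ (zm m₂ l t)) - (f₁ (z l t) + f₂ (z l t)))) S 0 = 0 := by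
    intro c m₁ m₂ hm₁ hm₂ r hrΛ h₁ h₂ j hj
    have hjN : ((j:ℕ) : WithTop ℕ∞) ≤ ((N:ℕ) : WithTop ℕ∞) := by
      exact_mod_cast (by omega : j ≤ N)
    have A₁ : ∀ l : Fin s, ContDiffOn ℝ (N:ℕ) (fun t => f₁ (zm m₁ l t)) S :=
      fun l => hf₁N.comp_contDiffOn (hzmOn m₁ hm₁ l)
    have A₂ : ∀ l : Fin s, ContDiffOn ℝ (N:ℕ) (fun t => f₂ (zm m₂ l t)) S :=
      fun l => hf₂N.comp_contDiffOn (hzmOn m₂ hm₂ l)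
    have B₁ : ∀ l : Fin s, ContDiffOn ℝ (N:ℕ) (fun t => f₁ (z l t)) S :=
      fun l => hf₁N.comp_contDiffOn (hzOn l)
    have B₂ : ∀ l : Fin s, ContDiffOn ℝ (N:ℕ) (fun t => f₂ (z l t)) S :=
      fun l => hf₂N.comp_contDiffOn (hzOn l)
    have hsm : ∀ l ∈ Finset.univ, ContDiffOn ℝ (j:ℕ) (fun t => c l •
        ((f₁ (zm m₁ l t) + f₂ (zm m₂ l t)) - (f₁ (z l t) + f₂ (z l t)))) S := by
      intro l _
      exact (ContDiffOn.const_smul _ (((A₁ l).add (A₂ l)).sub ((B₁ l).add (B₂ l)))).of_le hjN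
    rw [auxSum hsu h0S Finset.univ _ hsm]
    refine Finset.sum_eq_zero fun l _ => ?_
    have e : (fun t => c l • ((f₁ (zm m₁ l t) + f₂ (zm m₂ l t)) - (f₁ (z l t) + f₂ (z l t))))
        = c l • (fun t => (f₁ (zm m₁ l t) + f₂ (zm m₂ l t)) - (f₁ (z l t) + f₂ (z l t))) := rfl
    rw [e, iteratedDerivWithin_const_smul h0S hsu (c l)
      ((((A₁ l).add (A₂ l)).sub ((B₁ l).add (B₂ l))).of_le hjN 0 h0S)]
    have e2 : (fun t => (f₁ (zm m₁ l t) + f₂ (zm m₂ l t)) - (f₁ (z l t) + f₂ (z l t)))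
        = (fun t => f₁ (zm m₁ l t) + f₂ (zm m₂ l t)) - (fun t => f₁ (z l t) + f₂ (z l t)) := rfl
    rw [e2, iteratedDerivWithin_sub h0S hsu (((A₁ l).add (A₂ l)).of_le hjN 0 h0S)
      (((B₁ l).add (B₂ l)).of_le hjN 0 h0S)]
    have e3 : (fun t => f₁ (zm m₁ l t) + f₂ (zm m₂ l t))
        = (fun t => f₁ (zm m₁ l t)) + (fun t => f₂ (zm m₂ l t)) := rfl
    have e4 : (fun t => f₁ (z l t) + f₂ (z l t))
        = (fun t => f₁ (z l t)) + (fun t => f₂ (z l t)) := rfl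
    rw [e3, e4, iteratedDerivWithin_add h0S hsu ((A₁ l).of_le hjN 0 h0S) ((A₂ l).of_le hjN 0 h0S),
      iteratedDerivWithin_add h0S hsu ((B₁ l).of_le hjN 0 h0S) ((B₂ l).of_le hjN 0 h0S)]
    have C₁ := auxComp hSo h0S (by omega : r ≤ N) hf₁N (hzmOn m₁ hm₁ l) (hzOn l)
      (fun p hp => h₁ p hp l) j hj
    have C₂ := auxComp hSo h0S (by omega : r ≤ N) hf₂N (hzmOn m₂ hm₂ l) (hzOn l)
      (fun p hp => h₂ p hp l) j hj
    rw [C₁, C₂]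
    simp
  -- main induction: each sweep gains one order
  have key : ∀ p : ℕ, ∀ m, p ≤ m → m ≤ Λ → ∀ i,
      iteratedDerivWithin p (zm m i) S 0 = iteratedDerivWithin p (z i) S 0 := by
    intro p
    induction p using Nat.strong_induction_on with
    | _ p IH =>
      intro m hpm hmΛ i
      cases p with
      | zero =>
        simp only [iteratedDerivWithin_zero]
        have hz0 : z i 0 = zn := by rw [hz]; simp
        have hzm0' : zm m i 0 = zn := by
          cases m with
          | zero => exact hzm0 i 0
          | succ m' => rw [hzm]; simp
        rw [hz0, hzm0']
      | succ p' =>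
        obtain ⟨m'', rfl⟩ : ∃ m'', m = m'' + 1 := ⟨m - 1, by omega⟩
        have hdiff : (zm (m''+1) i - z i) = fun t => t •
            (∑ l, a i l • ((f₁ (zm (m''+1) l t) + f₂ (zm m'' l t))
              - (f₁ (z l t) + f₂ (z l t)))) := by
          funext t
          have h1 : zm (m''+1) i t - z i t
              = t • (∑ l, a i l • km (m''+1) l t - ∑ l, a i l • k l t) := by
            rw [hzm, hz, add_sub_add_left_eq_sub, ← smul_sub]
          rw [Pi.sub_apply, h1, ← Finset.sum_sub_distrib]
          congr 1
          refine Finset.sum_congr rfl fun l _ => ?_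
          rw [← smul_sub, hkm, hk]
        have goal' : iteratedDerivWithin (p'+1) (zm (m''+1) i - z i) S 0 = 0 := by
          rw [hdiff]
          refine auxTSmul hSo h0S p' _ ?_ ?_ (p'+1) le_rfl
          · exact (hWsmooth (a i) (m''+1) m'' hmΛ (by omega)).of_le
              (by exact_mod_cast (by omega : p' + 1 ≤ N))
          · refine hWvanish (a i) (m''+1) m'' hmΛ (by omega) p' (by omega)
              (fun p hp l => IH p (by omega) (m''+1) (by omega) hmΛ l)
              (fun p hp l => IH p (by omega) m'' (by omega) (by omega) l)
        have hsub := iteratedDerivWithin_sub (n := p'+1) h0S hsu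
          ((hzmOn (m''+1) hmΛ i).of_le (by exact_mod_cast (by omega : p' + 1 ≤ N)) 0 h0S)
          ((hzOn i).of_le (by exact_mod_cast (by omega : p' + 1 ≤ N)) 0 h0S)
        rw [hsub] at goal'
        exact sub_eq_zero.mp goal'
  -- conclusion
  intro q hq
  obtain ⟨Λ', rfl⟩ : ∃ Λ', Λ = Λ' + 1 := ⟨Λ - 1, by omega⟩
  have hdiff : (fun Δt => zPC Δt - zRK Δt) = fun t => t •
      (∑ l, b l • ((f₁ (zm (Λ'+1) l t) + f₂ (zm Λ' l t)) - (f₁ (z l t) + f₂ (z l t)))) := by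
    funext t
    rw [hzPC, hzRK, add_sub_add_left_eq_sub, ← smul_sub, ← Finset.sum_sub_distrib]
    congr 1
    refine Finset.sum_congr rfl fun l _ => ?_
    rw [← smul_sub]
    congr 2
  rw [hdiff]
  have hglobal : iteratedDeriv q (fun t => t •
      (∑ l, b l • ((f₁ (zm (Λ'+1) l t) + f₂ (zm Λ' l t)) - (f₁ (z l t) + f₂ (z l t))))) 0
      = iteratedDerivWithin q (fun t => t •
      (∑ l, b l • ((f₁ (zm (Λ'+1) l t) + f₂ (zm Λ' l t)) - (f₁ (z l t) + f₂ (z l t))))) S 0 := by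
    rw [iteratedDerivWithin_eq_iteratedFDerivWithin, iteratedDeriv_eq_iteratedFDeriv,
      iteratedFDerivWithin_of_isOpen q hSo h0S]
  rw [hglobal]
  refine auxTSmul hSo h0S Λ' _ ?_ ?_ q hq
  · exact (hWsmooth b (Λ'+1) Λ' le_rfl (by omega)).of_le
      (by exact_mod_cast (by omega : Λ' + 1 ≤ N))
  · exact hWvanish b (Λ'+1) Λ' le_rfl (by omega) Λ' (by omega)
      (fun p hp l => key p (Λ'+1) (by omega) le_rfl l)
      (fun p hp l => key p Λ' hp (by omega) l)
end

section
/- Let f₁, f₂ be smooth, and suppose the s-stage RK method (a, b) applied to z' = f₁(z) + f₂(z) has local truncation order p, i.e., z^{n+1}(Δt) - z(tₙ + Δt) = O(Δt^{p+1}) where z is the exact solution with z(tₙ) = zⁿ. Then the prediction-correction scheme with Λ sweeps satisfies z₍Λ₎^{n+1}(Δt) - z(tₙ + Δt) = O(Δt^{min(p,Λ)+1}). -/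
open Filter Metric Finset

private lemma aux_norm_sum {E : Type*} [NormedAddCommGroup E] [NormedSpace ℝ E] {s : ℕ}
    (c : Fin s → ℝ) (v : Fin s → E) : ‖∑ j, c j • v j‖ ≤ ∑ j, |c j| * ‖v j‖ := by
  refine le_trans (norm_sum_le _ _) (le_of_eq (Finset.sum_congr rfl fun j _ => ?_))
  rw [norm_smul, Real.norm_eq_abs]



set_option maxHeartbeats 1000000 in
/-- Theorem 2.4: if the underlying RK method has local truncation order `p`,
then the prediction-correction scheme with `Λ` sweeps has local order
`min p Λ`, i.e. its local error is `O(Δt^{min(p,Λ)+1})`. -/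
theorem stmt11 {n : ℕ} (s : ℕ)
    (f₁ f₂ : EuclideanSpace ℝ (Fin n) → EuclideanSpace ℝ (Fin n))
    (hf₁ : ContDiff ℝ (⊤ : ℕ∞) f₁) (hf₂ : ContDiff ℝ (⊤ : ℕ∞) f₂)
    (a : Fin s → Fin s → ℝ) (b : Fin s → ℝ) (hb : ∑ i, b i = 1)
    (zn : EuclideanSpace ℝ (Fin n))
    -- fully implicit RK stage values, as functions of `Δt`
    (z k : Fin s → ℝ → EuclideanSpace ℝ (Fin n))
    (hz : ∀ i Δt, z i Δt = zn + Δt • ∑ j, a i j • k j Δt)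
    (hk : ∀ i Δt, k i Δt = f₁ (z i Δt) + f₂ (z i Δt))
    -- linearly implicit prediction sweeps, as functions of `Δt`
    (zm km : ℕ → Fin s → ℝ → EuclideanSpace ℝ (Fin n))
    (hzm0 : ∀ i Δt, zm 0 i Δt = zn)
    (hzm : ∀ m i Δt, zm (m + 1) i Δt = zn + Δt • ∑ j, a i j • km (m + 1) j Δt)
    (hkm : ∀ m i Δt, km (m + 1) i Δt = f₁ (zm (m + 1) i Δt) + f₂ (zm m i Δt))
    -- smoothness in `Δt` near `0`
    (hzsmooth : ∀ i, ContDiffAt ℝ (⊤ : ℕ∞) (z i) 0)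
    (hzmsmooth : ∀ m i, ContDiffAt ℝ (⊤ : ℕ∞) (zm m i) 0)
    (Λ : ℕ) (hΛ : 1 ≤ Λ)
    -- the RK update, the prediction-correction update, and the exact solution
    (zRK zPC zex : ℝ → EuclideanSpace ℝ (Fin n))
    (hzRK : ∀ Δt, zRK Δt = zn + Δt • ∑ i, b i • (f₁ (z i Δt) + f₂ (z i Δt)))
    (hzPC : ∀ Δt, zPC Δt
      = zn + Δt • ∑ i, b i • (f₁ (zm Λ i Δt) + f₂ (zm (Λ - 1) i Δt)))
    -- `zex Δt = z(tₙ + Δt)` is the exact solution issued from `zn`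
    (zex' : ℝ → EuclideanSpace ℝ (Fin n))
    (hzex0 : zex 0 = zn)
    (hzex : ∀ Δt, HasDerivAt zex (zex' Δt) Δt)
    (hflow : ∀ Δt, zex' Δt = f₁ (zex Δt) + f₂ (zex Δt))
    -- the RK method has local truncation order `p`
    (p : ℕ)
    (hRKorder : ∃ C δ : ℝ, 0 < C ∧ 0 < δ ∧ ∀ Δt : ℝ, |Δt| ≤ δ →
      ‖zRK Δt - zex Δt‖ ≤ C * |Δt| ^ (p + 1)) :
    ∃ C δ : ℝ, 0 < C ∧ 0 < δ ∧ ∀ Δt : ℝ, |Δt| ≤ δ →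
      ‖zPC Δt - zex Δt‖ ≤ C * |Δt| ^ (min p Λ + 1) := by
  classical
  obtain ⟨C₀, δ₀, hC₀, hδ₀, hRK⟩ := hRKorder
  -- Lipschitz constants on a small ball around zn
  obtain ⟨K₁, t₁, ht₁, hL₁⟩ :=
    (hf₁.of_le (by simp) : ContDiff ℝ 1 f₁).contDiffAt.exists_lipschitzOnWith (x := zn)
  obtain ⟨K₂, t₂, ht₂, hL₂⟩ :=
    (hf₂.of_le (by simp) : ContDiff ℝ 1 f₂).contDiffAt.exists_lipschitzOnWith (x := zn)
  obtain ⟨ε, hε, hball⟩ := Metric.nhds_basis_closedBall.mem_iff.1 (inter_mem ht₁ ht₂)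
  set B := closedBall zn ε with hB
  set L : ℝ := (K₁ : ℝ) + (K₂ : ℝ) + 1 with hLdef
  have hK₁ : (0:ℝ) ≤ K₁ := K₁.coe_nonneg
  have hK₂ : (0:ℝ) ≤ K₂ := K₂.coe_nonneg
  have hL : 1 ≤ L := by rw [hLdef]; linarith
  have hL0 : 0 < L := by linarith
  have hLip₁ : ∀ x ∈ B, ∀ y ∈ B, ‖f₁ x - f₁ y‖ ≤ L * ‖x - y‖ := by
    intro x hx y hy
    have h := hL₁.dist_le_mul x (hball hx).1 y (hball hy).1
    rw [dist_eq_norm, dist_eq_norm] at h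
    have h2 : (K₁:ℝ) * ‖x - y‖ ≤ L * ‖x - y‖ := by
      apply mul_le_mul_of_nonneg_right _ (norm_nonneg _)
      rw [hLdef]; linarith
    linarith
  have hLip₂ : ∀ x ∈ B, ∀ y ∈ B, ‖f₂ x - f₂ y‖ ≤ L * ‖x - y‖ := by
    intro x hx y hy
    have h := hL₂.dist_le_mul x (hball hx).2 y (hball hy).2
    rw [dist_eq_norm, dist_eq_norm] at h
    have h2 : (K₂:ℝ) * ‖x - y‖ ≤ L * ‖x - y‖ := by
      apply mul_le_mul_of_nonneg_right _ (norm_nonneg _)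
      rw [hLdef]; linarith
    linarith
  -- bound on f₁ + f₂ on B
  set M : ℝ := ‖f₁ zn‖ + ‖f₂ zn‖ + 2 * L * ε + 1 with hMdef
  have hM0 : 0 < M := by positivity
  have hMb : ∀ x ∈ B, ∀ y ∈ B, ‖f₁ x + f₂ y‖ ≤ M := by
    intro x hx y hy
    have h1 : ‖f₁ x - f₁ zn‖ ≤ L * ε := by
      have := hLip₁ x hx zn (mem_closedBall_self hε.le)
      have hxz : ‖x - zn‖ ≤ ε := by simpa [dist_eq_norm] using (mem_closedBall.1 hx)
      nlinarith
    have h2 : ‖f₂ y - f₂ zn‖ ≤ L * ε := by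
      have := hLip₂ y hy zn (mem_closedBall_self hε.le)
      have hyz : ‖y - zn‖ ≤ ε := by simpa [dist_eq_norm] using (mem_closedBall.1 hy)
      nlinarith
    calc ‖f₁ x + f₂ y‖ = ‖(f₁ x - f₁ zn) + (f₂ y - f₂ zn) + f₁ zn + f₂ zn‖ := by abel_nf
      _ ≤ ‖f₁ x - f₁ zn‖ + ‖f₂ y - f₂ zn‖ + ‖f₁ zn‖ + ‖f₂ zn‖ := by
          refine le_trans (norm_add_le _ _) ?_
          refine add_le_add (le_trans (norm_add_le _ _) (add_le_add (norm_add_le _ _) le_rfl)) le_rfl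
      _ ≤ M := by rw [hMdef]; linarith
  -- coefficient bounds
  set A : ℝ := 1 + ∑ i, ∑ j, |a i j| with hAdef
  have hA1 : 1 ≤ A := by
    have h : (0:ℝ) ≤ ∑ i, ∑ j, |a i j| :=
      Finset.sum_nonneg fun i _ => Finset.sum_nonneg fun j _ => abs_nonneg _
    rw [hAdef]; linarith
  have hAb : ∀ i j, |a i j| ≤ A := by
    intro i j
    have h1 : |a i j| ≤ ∑ j', |a i j'| := Finset.single_le_sum (f := fun j' => |a i j'|) (fun j' _ => abs_nonneg _) (mem_univ j)
    have h2 : ∑ j', |a i j'| ≤ ∑ i', ∑ j', |a i' j'| :=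
      Finset.single_le_sum (f := fun i' => ∑ j', |a i' j'|) (fun i' _ => Finset.sum_nonneg fun j' _ => abs_nonneg _) (mem_univ i)
    rw [hAdef]; linarith
  set Bb : ℝ := 1 + ∑ i, |b i| with hBbdef
  have hBb1 : 1 ≤ Bb := by
    have h : (0:ℝ) ≤ ∑ i, |b i| := Finset.sum_nonneg fun i _ => abs_nonneg _
    rw [hBbdef]; linarith
  have hBbb : ∀ i, |b i| ≤ Bb := by
    intro i
    have h1 : |b i| ≤ ∑ i', |b i'| := Finset.single_le_sum (f := fun i' => |b i'|) (fun i' _ => abs_nonneg _) (mem_univ i)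
    rw [hBbdef]; linarith
  clear_value L M A Bb
  -- values at 0
  have hz0 : ∀ i, z i 0 = zn := fun i => by simp [hz]
  have hzm0' : ∀ m i, zm m i 0 = zn := by
    intro m i; cases m with
    | zero => exact hzm0 i 0
    | succ m => simp [hzm]
  -- confinement
  have hBnhds : B ∈ nhds zn := closedBall_mem_nhds zn hε
  have hconfz : ∀ᶠ Δt in nhds (0:ℝ), ∀ i, z i Δt ∈ B := by
    rw [Filter.eventually_all]
    intro i
    have : Tendsto (z i) (nhds 0) (nhds zn) := by
      have := (hzsmooth i).continuousAt.tendsto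
      rwa [hz0 i] at this
    exact this hBnhds
  have hconfm : ∀ m, ∀ᶠ Δt in nhds (0:ℝ), ∀ i, zm m i Δt ∈ B := by
    intro m
    rw [Filter.eventually_all]
    intro i
    have : Tendsto (zm m i) (nhds 0) (nhds zn) := by
      have := (hzmsmooth m i).continuousAt.tendsto
      rwa [hzm0' m i] at this
    exact this hBnhds
  -- key estimate: sweeps converge at rate Δt^{m+1}
  have key : ∀ m : ℕ, ∃ C : ℝ, 0 < C ∧ ∀ᶠ Δt in nhds (0:ℝ),
      ∑ j, ‖zm m j Δt - z j Δt‖ ≤ C * |Δt| ^ (m + 1) := by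
    intro m
    induction m with
    | zero =>
      refine ⟨s * s * A * M + 1, by positivity, ?_⟩
      filter_upwards [hconfz] with Δt hcz
      have hterm : ∀ j, ‖zm 0 j Δt - z j Δt‖ ≤ |Δt| * ((s:ℝ) * A * M) := by
        intro j
        rw [hzm0, norm_sub_rev, hz]
        have h1 : zn + Δt • ∑ l, a j l • k l Δt - zn = Δt • ∑ l, a j l • k l Δt := by abel
        rw [h1, norm_smul, Real.norm_eq_abs]
        refine mul_le_mul_of_nonneg_left ?_ (abs_nonneg _)
        calc ‖∑ l, a j l • k l Δt‖ ≤ ∑ l, |a j l| * ‖k l Δt‖ := aux_norm_sum _ _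
          _ ≤ ∑ _l : Fin s, A * M := by
              refine Finset.sum_le_sum fun l _ => ?_
              have hkb : ‖k l Δt‖ ≤ M := by rw [hk]; exact hMb _ (hcz l) _ (hcz l)
              exact mul_le_mul (hAb j l) hkb (norm_nonneg _) (by linarith)
          _ = (s:ℝ) * A * M := by
              rw [Finset.sum_const, Finset.card_univ, Fintype.card_fin, nsmul_eq_mul]; ring
      calc ∑ j, ‖zm 0 j Δt - z j Δt‖
          ≤ ∑ _j : Fin s, |Δt| * ((s:ℝ) * A * M) := Finset.sum_le_sum fun j _ => hterm j
        _ = (s:ℝ) * (s:ℝ) * A * M * |Δt| := by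
            rw [Finset.sum_const, Finset.card_univ, Fintype.card_fin, nsmul_eq_mul]; ring
        _ ≤ ((s:ℝ) * (s:ℝ) * A * M + 1) * |Δt| ^ (0 + 1) := by
            rw [pow_one]
            exact mul_le_mul_of_nonneg_right (by linarith) (abs_nonneg _)
    | succ m ih =>
      obtain ⟨Cm, hCm, hev⟩ := ih
      set κ : ℝ := (s:ℝ) * A * L with hκdef
      have hκ0 : 0 ≤ κ := by rw [hκdef]; positivity
      clear_value κ
      refine ⟨2 * κ * Cm + 1, by positivity, ?_⟩
      have hsmall : ∀ᶠ Δt in nhds (0:ℝ), |Δt| * κ ≤ 1/2 := by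
        filter_upwards [eventually_abs_sub_lt (0:ℝ) (by positivity : (0:ℝ) < 1/(2*κ+1))]
          with Δt h
        rw [sub_zero] at h
        have h2 : |Δt| * (2*κ+1) < 1 := by
          rw [← lt_div_iff₀ (by positivity)] ; exact h
        have h3 : |Δt| * (2*κ+1) = 2 * ( |Δt| * κ) + |Δt| := by ring
        have h4 := abs_nonneg Δt
        linarith
      filter_upwards [hconfz, hconfm m, hconfm (m+1), hev, hsmall]
        with Δt hcz hcm hcm1 hSm hsm
      set S := ∑ j, ‖zm (m+1) j Δt - z j Δt‖ with hSdef
      set Sm := ∑ j, ‖zm m j Δt - z j Δt‖ with hSmdef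
      have hS0 : 0 ≤ S := Finset.sum_nonneg fun j _ => norm_nonneg _
      have hSm0 : 0 ≤ Sm := Finset.sum_nonneg fun j _ => norm_nonneg _
      clear_value S Sm
      have hd : ∀ j, ‖km (m+1) j Δt - k j Δt‖
          ≤ L * ‖zm (m+1) j Δt - z j Δt‖ + L * ‖zm m j Δt - z j Δt‖ := by
        intro j
        rw [hkm, hk]
        have heq : f₁ (zm (m+1) j Δt) + f₂ (zm m j Δt) - (f₁ (z j Δt) + f₂ (z j Δt))
            = (f₁ (zm (m+1) j Δt) - f₁ (z j Δt)) + (f₂ (zm m j Δt) - f₂ (z j Δt)) := by abel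
        rw [heq]
        exact le_trans (norm_add_le _ _)
          (add_le_add (hLip₁ _ (hcm1 j) _ (hcz j)) (hLip₂ _ (hcm j) _ (hcz j)))
      have hterm : ∀ i, ‖zm (m+1) i Δt - z i Δt‖ ≤ |Δt| * (A * (L * S + L * Sm)) := by
        intro i
        rw [hzm, hz]
        have h1 : zn + Δt • ∑ j, a i j • km (m+1) j Δt - (zn + Δt • ∑ j, a i j • k j Δt)
            = Δt • ∑ j, a i j • (km (m+1) j Δt - k j Δt) := by
          have h2 : (∑ j, a i j • km (m+1) j Δt) - ∑ j, a i j • k j Δt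
              = ∑ j, a i j • (km (m+1) j Δt - k j Δt) := by
            rw [← Finset.sum_sub_distrib]
            exact Finset.sum_congr rfl fun j _ => (smul_sub _ _ _).symm
          rw [← h2, smul_sub]; abel
        rw [h1, norm_smul, Real.norm_eq_abs]
        refine mul_le_mul_of_nonneg_left ?_ (abs_nonneg _)
        calc ‖∑ j, a i j • (km (m+1) j Δt - k j Δt)‖
            ≤ ∑ j, |a i j| * ‖km (m+1) j Δt - k j Δt‖ := aux_norm_sum _ _
          _ ≤ ∑ j, A * (L * ‖zm (m+1) j Δt - z j Δt‖ + L * ‖zm m j Δt - z j Δt‖) := by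
              refine Finset.sum_le_sum fun j _ => ?_
              refine mul_le_mul (hAb i j) (hd j) (norm_nonneg _) (by linarith)
          _ = A * (L * S + L * Sm) := by
              rw [← Finset.mul_sum, Finset.sum_add_distrib, ← Finset.mul_sum, ← Finset.mul_sum,
                hSdef, hSmdef]
      have hsum : S ≤ |Δt| * κ * S + |Δt| * κ * Sm := by
        have h3 : S ≤ ∑ _i : Fin s, |Δt| * (A * (L * S + L * Sm)) := by
          conv_lhs => rw [hSdef]
          exact Finset.sum_le_sum fun i _ => hterm i
        have h4 : (∑ _i : Fin s, |Δt| * (A * (L * S + L * Sm)))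
            = |Δt| * κ * S + |Δt| * κ * Sm := by
          rw [Finset.sum_const, Finset.card_univ, Fintype.card_fin, nsmul_eq_mul, hκdef]; ring
        rw [h4] at h3; exact h3
      have h5 : |Δt| * κ * S ≤ (1/2) * S := mul_le_mul_of_nonneg_right hsm hS0
      have h6 : S ≤ 2 * (|Δt| * κ) * Sm := by
        have h7 : 2 * (|Δt| * κ) * Sm = |Δt| * κ * Sm + |Δt| * κ * Sm := by ring
        linarith
      calc S ≤ 2 * (|Δt| * κ) * Sm := h6
        _ ≤ 2 * (|Δt| * κ) * (Cm * |Δt| ^ (m+1)) := by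
            refine mul_le_mul_of_nonneg_left hSm (by positivity)
        _ = 2 * κ * Cm * |Δt| ^ (m + 1 + 1) := by rw [pow_succ]; ring
        _ ≤ (2 * κ * Cm + 1) * |Δt| ^ (m + 1 + 1) := by
            refine mul_le_mul_of_nonneg_right (by linarith) (by positivity)
  -- PC vs RK discrepancy
  have keyPC : ∃ C : ℝ, 0 < C ∧ ∀ᶠ Δt in nhds (0:ℝ),
      ‖zPC Δt - zRK Δt‖ ≤ C * |Δt| ^ (Λ + 1) := by
    obtain ⟨CΛ, hCΛ, hevΛ⟩ := key Λ
    obtain ⟨CΛ1, hCΛ1, hevΛ1⟩ := key (Λ - 1)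
    have hΛeq : Λ - 1 + 1 = Λ := Nat.sub_add_cancel hΛ
    refine ⟨Bb * L * (CΛ + CΛ1) + 1, by positivity, ?_⟩
    have hone : ∀ᶠ Δt in nhds (0:ℝ), |Δt| ≤ 1 := by
      filter_upwards [eventually_abs_sub_lt (0:ℝ) one_pos] with Δt h
      rw [sub_zero] at h; linarith
    filter_upwards [hconfz, hconfm Λ, hconfm (Λ-1), hevΛ, hevΛ1, hone]
      with Δt hcz hcΛ hcΛ1 hSΛ hSΛ1 h1
    rw [hΛeq] at hSΛ1
    set SΛ := ∑ j, ‖zm Λ j Δt - z j Δt‖ with hSΛdef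
    set SΛ1 := ∑ j, ‖zm (Λ-1) j Δt - z j Δt‖ with hSΛ1def
    have hSΛ0 : 0 ≤ SΛ := Finset.sum_nonneg fun j _ => norm_nonneg _
    have hSΛ10 : 0 ≤ SΛ1 := Finset.sum_nonneg fun j _ => norm_nonneg _
    clear_value SΛ SΛ1
    have hd : ∀ i, ‖(f₁ (zm Λ i Δt) + f₂ (zm (Λ-1) i Δt)) - (f₁ (z i Δt) + f₂ (z i Δt))‖
        ≤ L * ‖zm Λ i Δt - z i Δt‖ + L * ‖zm (Λ-1) i Δt - z i Δt‖ := by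
      intro i
      have heq : f₁ (zm Λ i Δt) + f₂ (zm (Λ-1) i Δt) - (f₁ (z i Δt) + f₂ (z i Δt))
          = (f₁ (zm Λ i Δt) - f₁ (z i Δt)) + (f₂ (zm (Λ-1) i Δt) - f₂ (z i Δt)) := by abel
      rw [heq]
      exact le_trans (norm_add_le _ _)
        (add_le_add (hLip₁ _ (hcΛ i) _ (hcz i)) (hLip₂ _ (hcΛ1 i) _ (hcz i)))
    have h2 : zPC Δt - zRK Δt = Δt • ∑ i, b i •
        ((f₁ (zm Λ i Δt) + f₂ (zm (Λ-1) i Δt)) - (f₁ (z i Δt) + f₂ (z i Δt))) := by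
      rw [hzPC, hzRK]
      have h3 : (∑ i, b i • (f₁ (zm Λ i Δt) + f₂ (zm (Λ-1) i Δt)))
          - ∑ i, b i • (f₁ (z i Δt) + f₂ (z i Δt))
          = ∑ i, b i • ((f₁ (zm Λ i Δt) + f₂ (zm (Λ-1) i Δt)) - (f₁ (z i Δt) + f₂ (z i Δt))) := by
        rw [← Finset.sum_sub_distrib]
        exact Finset.sum_congr rfl fun i _ => (smul_sub _ _ _).symm
      rw [← h3, smul_sub]; abel
    rw [h2, norm_smul, Real.norm_eq_abs]
    have h4 : ‖∑ i, b i • ((f₁ (zm Λ i Δt) + f₂ (zm (Λ-1) i Δt)) - (f₁ (z i Δt) + f₂ (z i Δt)))‖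
        ≤ Bb * (L * SΛ + L * SΛ1) := by
      calc ‖∑ i, b i • ((f₁ (zm Λ i Δt) + f₂ (zm (Λ-1) i Δt)) - (f₁ (z i Δt) + f₂ (z i Δt)))‖
          ≤ ∑ i, |b i| * ‖(f₁ (zm Λ i Δt) + f₂ (zm (Λ-1) i Δt)) - (f₁ (z i Δt) + f₂ (z i Δt))‖ :=
            aux_norm_sum _ _
        _ ≤ ∑ i, Bb * (L * ‖zm Λ i Δt - z i Δt‖ + L * ‖zm (Λ-1) i Δt - z i Δt‖) := by
            refine Finset.sum_le_sum fun i _ => ?_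
            exact mul_le_mul (hBbb i) (hd i) (norm_nonneg _) (by linarith)
        _ = Bb * (L * SΛ + L * SΛ1) := by
            rw [← Finset.mul_sum, Finset.sum_add_distrib, ← Finset.mul_sum, ← Finset.mul_sum,
              hSΛdef, hSΛ1def]
    calc |Δt| * ‖∑ i, b i • ((f₁ (zm Λ i Δt) + f₂ (zm (Λ-1) i Δt)) - (f₁ (z i Δt) + f₂ (z i Δt)))‖
        ≤ |Δt| * (Bb * (L * SΛ + L * SΛ1)) := mul_le_mul_of_nonneg_left h4 (abs_nonneg _)
      _ ≤ |Δt| * (Bb * (L * (CΛ * |Δt| ^ (Λ+1)) + L * (CΛ1 * |Δt| ^ Λ))) := by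
          refine mul_le_mul_of_nonneg_left ?_ (abs_nonneg _)
          refine mul_le_mul_of_nonneg_left ?_ (by linarith)
          exact add_le_add (mul_le_mul_of_nonneg_left hSΛ (by linarith))
            (mul_le_mul_of_nonneg_left hSΛ1 (by linarith))
      _ = Bb * L * CΛ * (|Δt| ^ (Λ+1) * |Δt|) + Bb * L * CΛ1 * |Δt| ^ (Λ+1) := by
          rw [pow_succ]; ring
      _ ≤ Bb * L * CΛ * |Δt| ^ (Λ+1) + Bb * L * CΛ1 * |Δt| ^ (Λ+1) := by
          refine add_le_add (mul_le_mul_of_nonneg_left ?_ (by positivity)) le_rfl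
          calc |Δt| ^ (Λ+1) * |Δt| ≤ |Δt| ^ (Λ+1) * 1 :=
                mul_le_mul_of_nonneg_left h1 (by positivity)
            _ = |Δt| ^ (Λ+1) := mul_one _
      _ ≤ (Bb * L * (CΛ + CΛ1) + 1) * |Δt| ^ (Λ+1) := by
          have he : Bb * L * CΛ * |Δt| ^ (Λ+1) + Bb * L * CΛ1 * |Δt| ^ (Λ+1)
              = (Bb * L * (CΛ + CΛ1)) * |Δt| ^ (Λ+1) := by ring
          rw [he]
          exact mul_le_mul_of_nonneg_right (by nlinarith) (by positivity)
  -- conclude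
  obtain ⟨C₁, hC₁, hPCRK⟩ := keyPC
  obtain ⟨δ₁, hδ₁, hPCRK'⟩ := Metric.eventually_nhds_iff.1 hPCRK
  refine ⟨C₁ + C₀, min (min δ₀ (δ₁ / 2)) 1, by linarith, lt_min (lt_min hδ₀ (by linarith)) one_pos, ?_⟩
  intro Δt hΔt
  have hΔt1 : |Δt| ≤ 1 := le_trans hΔt (min_le_right _ _)
  have hΔtδ₀ : |Δt| ≤ δ₀ := le_trans hΔt (le_trans (min_le_left _ _) (min_le_left _ _))
  have hΔtδ₁ : dist Δt 0 < δ₁ := by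
    have : |Δt| ≤ δ₁ / 2 := le_trans hΔt (le_trans (min_le_left _ _) (min_le_right _ _))
    rw [Real.dist_eq, sub_zero]; linarith
  have h1 := hPCRK' hΔtδ₁
  have h2 := hRK Δt hΔtδ₀
  have habs : (0:ℝ) ≤ |Δt| := abs_nonneg _
  have hpow1 : |Δt| ^ (Λ + 1) ≤ |Δt| ^ (min p Λ + 1) :=
    pow_le_pow_of_le_one habs hΔt1 (by omega)
  have hpow2 : |Δt| ^ (p + 1) ≤ |Δt| ^ (min p Λ + 1) :=
    pow_le_pow_of_le_one habs hΔt1 (by omega)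
  calc ‖zPC Δt - zex Δt‖ ≤ ‖zPC Δt - zRK Δt‖ + ‖zRK Δt - zex Δt‖ := by
        have : zPC Δt - zex Δt = (zPC Δt - zRK Δt) + (zRK Δt - zex Δt) := by abel
        rw [this]; exact norm_add_le _ _
    _ ≤ C₁ * |Δt| ^ (Λ + 1) + C₀ * |Δt| ^ (p + 1) := add_le_add h1 h2
    _ ≤ C₁ * |Δt| ^ (min p Λ + 1) + C₀ * |Δt| ^ (min p Λ + 1) := by
        exact add_le_add (mul_le_mul_of_nonneg_left hpow1 hC₁.le)
          (mul_le_mul_of_nonneg_left hpow2 hC₀.le)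
    _ = (C₁ + C₀) * |Δt| ^ (min p Λ + 1) := (add_mul _ _ _).symm
end
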